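/- arXiv:1406.4587 — 10 statements merged into one kernel-verified Lean document; each statement's English description precedes it below -/
import Mathlib

section
/- Let X be a compact ultrametric space, let x ∈ X and r > 0. Then the ball B_r(x) is contained in at most finitely many distinct balls of X; that is, the set {B : B is a ball of X and B_r(x) ⊆ B} of subsets of X is finite. -/
/-- A ball in a metric space: an open metric ball of positive radius. -/
def IsBall {X : Type*} [MetricSpace X] (B : Set X) : Prop :=
  ∃ (c : X) (r : ℝ), 0 < r ∧ B = Metric.ball c r

/-- In a compact ultrametric space, every ball is contained in at most finitely
many distinct balls. -/
theorem ball_contained_in_finitely_many_balls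
    {X : Type*} [MetricSpace X] [CompactSpace X]
    (hX : ∀ x y z : X, dist x y ≤ max (dist x z) (dist z y))
    (x : X) (r : ℝ) (hr : 0 < r) :
    {B : Set X | IsBall B ∧ Metric.ball x r ⊆ B}.Finite := by
  classical
  set T : Set ℝ := {t | r ≤ t ∧ ∃ y : X, dist x y = t} with hTdef
  -- witness function
  set w : ℝ → X := fun t => if h : ∃ y : X, dist x y = t then h.choose else x with hw
  have hwT : ∀ t ∈ T, dist x (w t) = t := by
    intro t ht
    simp only [hw, dif_pos ht.2]
    exact ht.2.choose_spec
  -- witnesses of distinct elements of T are r-separated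
  have hsep : ∀ t₁ ∈ T, ∀ t₂ ∈ T, t₁ ≠ t₂ → r ≤ dist (w t₁) (w t₂) := by
    intro t₁ h₁ t₂ h₂ hne
    rcases lt_or_gt_of_ne hne with h | h
    · have := hX x (w t₂) (w t₁)
      rw [hwT t₁ h₁, hwT t₂ h₂] at this
      have : t₂ ≤ dist (w t₁) (w t₂) := by
        rcases max_cases t₁ (dist (w t₁) (w t₂)) with ⟨he, _⟩ | ⟨he, _⟩ <;> rw [he] at this <;> linarith
      linarith [h₂.1]
    · have := hX x (w t₁) (w t₂)
      rw [hwT t₁ h₁, hwT t₂ h₂, dist_comm (w t₂) (w t₁)] at this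
      have : t₁ ≤ dist (w t₁) (w t₂) := by
        rcases max_cases t₂ (dist (w t₁) (w t₂)) with ⟨he, _⟩ | ⟨he, _⟩ <;> rw [he] at this <;> linarith
      linarith [h₁.1]
  -- T is finite by total boundedness
  have hT : T.Finite := by
    obtain ⟨F, hFfin, hFcov⟩ :=
      Metric.totallyBounded_iff.mp (isCompact_univ (X := X)).totallyBounded r hr
    have hex : ∀ t ∈ T, ∃ c ∈ F, w t ∈ Metric.ball c r := by
      intro t _
      have := hFcov (Set.mem_univ (w t))
      simpa using this
    set g : ℝ → X := fun t => if h : ∃ c ∈ F, w t ∈ Metric.ball c r then h.choose else x with hg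
    have hgF : ∀ t ∈ T, g t ∈ F ∧ w t ∈ Metric.ball (g t) r := by
      intro t ht
      have h := hex t ht
      simp only [hg, dif_pos h]
      exact ⟨h.choose_spec.1, h.choose_spec.2⟩
    apply Set.Finite.of_finite_image (f := g)
    · exact hFfin.subset (by rintro _ ⟨t, ht, rfl⟩; exact (hgF t ht).1)
    · intro t₁ h₁ t₂ h₂ heq
      by_contra hne
      have hd := hsep t₁ h₁ t₂ h₂ hne
      have hb₁ := (hgF t₁ h₁).2
      have hb₂ := (hgF t₂ h₂).2
      rw [heq] at hb₁
      rw [Metric.mem_ball] at hb₁ hb₂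
      have h3 : dist (w t₁) (w t₂) ≤ max (dist (w t₁) (g t₂)) (dist (g t₂) (w t₂)) :=
        hX _ _ _
      rw [dist_comm (g t₂) (w t₂)] at h3
      have : dist (w t₁) (w t₂) < r := lt_of_le_of_lt h3 (max_lt hb₁ hb₂)
      linarith
  -- membership in any ball of our family depends only on distance to x
  have hkey : ∀ B ∈ {B : Set X | IsBall B ∧ Metric.ball x r ⊆ B},
      ∀ y y' : X, dist x y = dist x y' → y' ∈ B → y ∈ B := by
    rintro B ⟨⟨c, s, hs, rfl⟩, hsub⟩ y y' hdd hy'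
    have hx : x ∈ Metric.ball c s := hsub (Metric.mem_ball_self hr)
    rw [Metric.mem_ball] at hx hy' ⊢
    have h1 : dist x y' ≤ max (dist x c) (dist c y') := hX x y' c
    rw [dist_comm c y'] at h1
    have hxy : dist x y < s := by
      rw [hdd]; exact lt_of_le_of_lt h1 (max_lt hx hy')
    have h2 : dist y c ≤ max (dist y x) (dist x c) := hX y c x
    rw [dist_comm y x] at h2
    exact lt_of_le_of_lt h2 (max_lt hxy hx)
  -- the map to subsets of T
  set f : Set X → Set ℝ := fun B => {t ∈ T | ∃ y ∈ B, dist x y = t} with hf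
  apply Set.Finite.of_finite_image (f := f)
  · exact hT.finite_subsets.subset (by rintro _ ⟨B, hB, rfl⟩; intro t ht; exact ht.1)
  · intro B₁ h₁ B₂ h₂ heq
    have hmono : ∀ B ∈ {B : Set X | IsBall B ∧ Metric.ball x r ⊆ B},
        ∀ B' ∈ {B : Set X | IsBall B ∧ Metric.ball x r ⊆ B},
        f B = f B' → B ⊆ B' := by
      intro B hB B' hB' hfe y hy
      by_cases hyr : dist x y < r
      · exact hB'.2 (by rwa [Metric.mem_ball, dist_comm])
      · have ht : dist x y ∈ T := ⟨le_of_not_gt hyr, y, rfl⟩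
        have : dist x y ∈ f B := ⟨ht, y, hy, rfl⟩
        rw [hfe] at this
        obtain ⟨-, y', hy', hdy'⟩ := this
        exact hkey B' hB' y y' hdy'.symm hy'
    exact subset_antisymm (hmono B₁ h₁ B₂ h₂ heq) (hmono B₂ h₂ B₁ h₁ heq.symm)
end

section
/- Let X be a compact ultrametric space and let B be a ball of X containing at least two points. Then the collection of maximal proper subballs of B is finite, its members are pairwise disjoint, and their union is B; that is, B is partitioned by its maximal proper subballs, which are finite in number. -/
/-- `B'` is a maximal proper subball of `B`: a ball properly contained in `B`
with no ball strictly between. -/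
def IsMaxSubball {X : Type*} [MetricSpace X] (B' B : Set X) : Prop :=
  IsBall B' ∧ B' ⊂ B ∧ ∀ B'' : Set X, IsBall B'' → ¬(B' ⊂ B'' ∧ B'' ⊂ B)

/-!
In an ultrametric space every point of a ball is a centre, so two balls are nested or disjoint;
hence two maximal proper subballs of `B` that meet are equal. If `B` is compact, the distance
from `x ∈ B` attains its maximum `t` on `B`, and `ball x t` is a maximal proper subball
containing `x` (positive radius since `B` has two points). So the maximal proper subballs form
a partition of `B` into open sets, which is finite by compactness.
-/

open Metric IsUltrametricDist

theorem IsCompact.finite_of_pairwiseDisjoint_cover {X : Type*} [TopologicalSpace X]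
    {K : Set X} {S : Set (Set X)} (hK : IsCompact K) (hopen : ∀ A ∈ S, IsOpen A)
    (hcover : K ⊆ ⋃₀ S) (hdisj : S.Pairwise Disjoint) (hmeet : ∀ A ∈ S, (A ∩ K).Nonempty) :
    S.Finite := by
  obtain ⟨T, hTS, hTfin, hKT⟩ :=
    hK.elim_finite_subcover_image (c := id) hopen (by rwa [Set.sUnion_eq_biUnion] at hcover)
  refine hTfin.subset fun A hA => ?_
  obtain ⟨x, hxA, hxK⟩ := hmeet A hA
  obtain ⟨A', hA'T, hxA'⟩ := Set.mem_iUnion₂.mp (hKT hxK)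
  obtain rfl : A = A' :=
    hdisj.eq hA (hTS hA'T) (Set.not_disjoint_iff.mpr ⟨x, hxA, hxA'⟩)
  exact hA'T

section

variable {X : Type*} [MetricSpace X]

theorem IsBall.isOpen {B : Set X} (hB : IsBall B) : IsOpen B := by
  obtain ⟨c, r, -, rfl⟩ := hB
  exact isOpen_ball

theorem IsBall.nonempty {B : Set X} (hB : IsBall B) : B.Nonempty := by
  obtain ⟨c, r, hr, rfl⟩ := hB
  exact nonempty_ball.mpr hr

variable [IsUltrametricDist X]

theorem IsBall.eq_ball_of_mem {B : Set X} (hB : IsBall B) {x : X} (hx : x ∈ B) :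
    ∃ r, 0 < r ∧ B = ball x r := by
  obtain ⟨c, r, hr, rfl⟩ := hB
  exact ⟨r, hr, ball_eq_of_mem hx⟩

theorem IsMaxSubball.eq_of_not_disjoint {A A' B : Set X} (hA : IsMaxSubball A B)
    (hA' : IsMaxSubball A' B) (h : ¬Disjoint A A') : A = A' := by
  obtain ⟨a, s, -, rfl⟩ := hA.1
  obtain ⟨a', s', -, rfl⟩ := hA'.1
  by_contra hne
  rcases ball_subset_trichotomy (x := a) (y := a') (r := s) (s := s') with hsub | hsub | hdisj
  · exact hA.2.2 _ hA'.1 ⟨hsub.ssubset_of_ne hne, hA'.2.1⟩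
  · exact hA'.2.2 _ hA.1 ⟨hsub.ssubset_of_ne (Ne.symm hne), hA.2.1⟩
  · exact h hdisj

theorem pairwise_disjoint_isMaxSubball (B : Set X) :
    {A : Set X | IsMaxSubball A B}.Pairwise Disjoint :=
  fun _ hA _ hA' hne => by_contra fun h => hne (hA.eq_of_not_disjoint hA' h)

theorem isMaxSubball_ball_dist {x y : X} {r : ℝ} (hy : y ∈ ball x r) (hxy : x ≠ y)
    (hmax : ∀ z ∈ ball x r, dist x z ≤ dist x y) :
    IsMaxSubball (ball x (dist x y)) (ball x r) := by
  have hy_not_mem : y ∉ ball x (dist x y) := by simp [dist_comm]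
  refine ⟨⟨x, dist x y, dist_pos.mpr hxy, rfl⟩,
    ⟨ball_subset_ball (by simpa [dist_comm] using (mem_ball.mp hy).le), fun h => hy_not_mem (h hy)⟩, ?_⟩
  rintro _ hB'' ⟨hsub, hsup⟩
  obtain ⟨ρ, -, rfl⟩ := hB''.eq_ball_of_mem (hsub.subset (mem_ball_self (dist_pos.mpr hxy)))
  obtain ⟨w, hwρ, hwt⟩ := Set.exists_of_ssubset hsub
  have hyw : dist x y ≤ dist x w := by simpa [dist_comm] using hwt
  have hρ : dist x y < ρ := hyw.trans_lt (by simpa [dist_comm] using hwρ)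
  refine hsup.2 fun z hz => ?_
  simpa [dist_comm] using (hmax z hz).trans_lt hρ

theorem exists_isMaxSubball_mem {B : Set X} (hB : IsBall B) (hBc : IsCompact B)
    (hB2 : B.Nontrivial) {x : X} (hx : x ∈ B) : ∃ A, IsMaxSubball A B ∧ x ∈ A := by
  obtain ⟨r, -, rfl⟩ := hB.eq_ball_of_mem hx
  obtain ⟨y, hy, hmax⟩ := hBc.exists_isMaxOn hB2.nonempty
    (continuous_const.dist continuous_id).continuousOn (f := fun z => dist x z)
  have hmax : ∀ z ∈ ball x r, dist x z ≤ dist x y := fun z hz => hmax hz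
  have hxy : x ≠ y := by
    obtain ⟨z, hz, hzx⟩ := hB2.exists_ne x
    rintro rfl
    exact hzx (dist_le_zero.mp ((hmax z hz).trans_eq (dist_self x))).symm
  exact ⟨_, isMaxSubball_ball_dist hy hxy hmax, mem_ball_self (dist_pos.mpr hxy)⟩

theorem sUnion_isMaxSubball {B : Set X} (hB : IsBall B) (hBc : IsCompact B)
    (hB2 : B.Nontrivial) : ⋃₀ {A : Set X | IsMaxSubball A B} = B :=
  (Set.sUnion_subset fun _ hA => hA.2.1.subset).antisymm fun _ hx =>
    let ⟨A, hA, hxA⟩ := exists_isMaxSubball_mem hB hBc hB2 hx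
    ⟨A, hA, hxA⟩

end

/-- In a compact ultrametric space, a ball with at least two points is
partitioned by its maximal proper subballs, which are finite in number. -/
theorem ball_partitioned_by_maximal_proper_subballs
    {X : Type*} [MetricSpace X] [CompactSpace X]
    (hX : ∀ x y z : X, dist x y ≤ max (dist x z) (dist z y))
    (B : Set X) (hB : IsBall B) (h2 : ∃ a ∈ B, ∃ b ∈ B, a ≠ b) :
    {B' : Set X | IsMaxSubball B' B}.Finite ∧
    {B' : Set X | IsMaxSubball B' B}.Pairwise (fun A A' => Disjoint A A') ∧
    ⋃₀ {B' : Set X | IsMaxSubball B' B} = B := by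
  have : IsUltrametricDist X := ⟨fun x y z => hX x z y⟩
  have hBc : IsCompact B := by
    obtain ⟨c, r, -, rfl⟩ := hB
    exact (isClosed_ball c r).isCompact
  have hcover := sUnion_isMaxSubball hB hBc h2
  refine ⟨hBc.finite_of_pairwiseDisjoint_cover (fun A hA => hA.1.isOpen) hcover.ge
    (pairwise_disjoint_isMaxSubball B) (fun A hA => ?_), pairwise_disjoint_isMaxSubball B, hcover⟩
  rw [Set.inter_eq_left.mpr hA.2.1.subset]
  exact hA.1.nonempty
end

section
/- Let X be a nonempty compact ultrametric space and let B be a ball of X with B ≠ X. Then there is a unique ball B̂ of X such that B is a maximal proper subball of B̂. -/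
/-- In an ultrametric space, every point of a ball is a center of it. -/
lemma ultra_recenter {X : Type*} [MetricSpace X]
    (hX : ∀ x y z : X, dist x y ≤ max (dist x z) (dist z y))
    {c x : X} {r : ℝ} (hx : x ∈ Metric.ball c r) :
    Metric.ball c r = Metric.ball x r := by
  rw [Metric.mem_ball] at hx
  ext y
  simp only [Metric.mem_ball]
  constructor
  · intro h
    calc dist y x ≤ max (dist y c) (dist c x) := hX y x c
      _ < r := by rw [dist_comm c x]; exact max_lt h hx
  · intro h
    calc dist y c ≤ max (dist y x) (dist x c) := hX y c x
      _ < r := max_lt h hx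

/-- In a nonempty compact ultrametric space, every ball `B ≠ X` is a maximal
proper subball of a unique ball `B̂`. -/
theorem exists_unique_parent_ball
    {X : Type*} [MetricSpace X] [CompactSpace X] [Nonempty X]
    (hX : ∀ x y z : X, dist x y ≤ max (dist x z) (dist z y))
    (B : Set X) (hB : IsBall B) (hne : B ≠ Set.univ) :
    ∃! Bhat : Set X, IsBall Bhat ∧ IsMaxSubball B Bhat := by
  obtain ⟨c, r, hr, rfl⟩ := hB
  have hc : c ∈ Metric.ball c r := Metric.mem_ball_self hr
  -- the complement of B is nonempty and compact
  have hKne : ((Metric.ball c r)ᶜ : Set X).Nonempty := by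
    rw [Set.nonempty_compl]; exact hne
  have hKcp : IsCompact ((Metric.ball c r)ᶜ : Set X) :=
    (Metric.isOpen_ball.isClosed_compl).isCompact
  -- minimize distance to c over the complement
  obtain ⟨y₀, hy₀K, hy₀min⟩ :=
    hKcp.exists_isMinOn hKne ((continuous_const.dist continuous_id).continuousOn
      (s := ((Metric.ball c r)ᶜ : Set X)))
  set ρ : ℝ := dist c y₀ with hρdef
  have hrρ : r ≤ ρ := by
    have : ¬ dist y₀ c < r := by simpa [Metric.mem_ball] using hy₀K
    rw [hρdef, dist_comm]; linarith [not_lt.mp this]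
  have hρpos : 0 < ρ := lt_of_lt_of_le hr hrρ
  have hmin : ∀ y ∈ ((Metric.ball c r)ᶜ : Set X), ρ ≤ dist c y := fun y hy => hy₀min hy
  -- the closed set {y | dist c y ≤ ρ} is open (ultrametric)
  have hopen : IsOpen {y : X | dist c y ≤ ρ} := by
    rw [Metric.isOpen_iff]
    intro z hz
    refine ⟨ρ, hρpos, fun y hy => ?_⟩
    rw [Metric.mem_ball] at hy
    calc dist c y ≤ max (dist c z) (dist z y) := hX c y z
      _ ≤ ρ := max_le hz (by rw [dist_comm]; exact le_of_lt hy)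
  -- there is a gap above ρ : find s > ρ with ball c s = {y | dist c y ≤ ρ}
  obtain ⟨s, hsρ, hsball⟩ :
      ∃ s : ℝ, ρ < s ∧ Metric.ball c s = {y : X | dist c y ≤ ρ} := by
    by_cases h2 : ({y : X | ρ < dist c y}).Nonempty
    · have hcl : IsClosed {y : X | ρ < dist c y} := by
        have : {y : X | ρ < dist c y} = {y : X | dist c y ≤ ρ}ᶜ := by
          ext y; simp [not_le]
        rw [this]; exact hopen.isClosed_compl
      obtain ⟨y₁, hy₁mem, hy₁min⟩ :=
        hcl.isCompact.exists_isMinOn h2 ((continuous_const.dist continuous_id).continuousOn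
          (s := {y : X | ρ < dist c y}))
      have hσ : ρ < dist c y₁ := hy₁mem
      refine ⟨(ρ + dist c y₁) / 2, by linarith, ?_⟩
      ext y
      simp only [Metric.mem_ball, Set.mem_setOf_eq]
      constructor
      · intro hy
        by_contra hgt
        push_neg at hgt
        have : dist c y₁ ≤ dist c y := hy₁min hgt
        rw [dist_comm y c] at hy
        linarith
      · intro hy
        rw [dist_comm]
        linarith
    · refine ⟨ρ + 1, by linarith, ?_⟩
      have hall : ∀ y : X, dist c y ≤ ρ := by
        intro y
        by_contra hgt
        exact h2 ⟨y, not_le.mp hgt⟩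
      ext y
      simp only [Metric.mem_ball, Set.mem_setOf_eq]
      constructor
      · intro _; exact hall y
      · intro _; rw [dist_comm]; linarith [hall y]
  -- the parent ball
  have hBhatBall : IsBall (Metric.ball c s) := ⟨c, s, lt_trans hρpos hsρ, rfl⟩
  have hy₀hat : y₀ ∈ Metric.ball c s := by rw [hsball]; exact le_refl ρ
  have hy₀not : y₀ ∉ Metric.ball c r := hy₀K
  have hsub : Metric.ball c r ⊆ Metric.ball c s :=
    Metric.ball_subset_ball (le_of_lt (lt_of_le_of_lt hrρ hsρ))
  have hss : Metric.ball c r ⊂ Metric.ball c s :=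
    ⟨hsub, fun h => hy₀not (h hy₀hat)⟩
  -- maximality
  have hmax : ∀ B'' : Set X, IsBall B'' →
      ¬(Metric.ball c r ⊂ B'' ∧ B'' ⊂ Metric.ball c s) := by
    rintro B'' ⟨c'', r'', hr'', rfl⟩ ⟨h1, h2⟩
    have hcB'' : c ∈ Metric.ball c'' r'' := h1.1 hc
    have hre : Metric.ball c'' r'' = Metric.ball c r'' := ultra_recenter hX hcB''
    rw [hre] at h1 h2
    obtain ⟨y, hyB'', hynB⟩ := Set.exists_of_ssubset h1
    have hyρ : ρ ≤ dist c y := hmin y hynB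
    have hyr'' : dist c y < r'' := by
      rw [dist_comm]; exact Metric.mem_ball.mp hyB''
    have hρr'' : ρ < r'' := lt_of_le_of_lt hyρ hyr''
    have : Metric.ball c s ⊆ Metric.ball c r'' := by
      intro z hz
      rw [hsball] at hz
      rw [Metric.mem_ball, dist_comm]
      exact lt_of_le_of_lt hz hρr''
    exact h2.not_subset this
  refine ⟨Metric.ball c s, ⟨hBhatBall, ⟨c, r, hr, rfl⟩, hss, hmax⟩, ?_⟩
  -- uniqueness
  rintro B' ⟨⟨c', r', hr', rfl⟩, _, hss', hmax'⟩
  have hcB' : c ∈ Metric.ball c' r' := hss'.1 hc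
  rw [ultra_recenter hX hcB'] at hss' hmax' ⊢
  rcases le_total r' s with hle | hle
  · by_contra hnee
    exact hmax (Metric.ball c r') ⟨c, r', lt_of_le_of_lt dist_nonneg
      (Metric.mem_ball.mp (hss'.1 hc)), rfl⟩
      ⟨hss', ⟨Metric.ball_subset_ball hle,
        fun h => hnee (subset_antisymm (Metric.ball_subset_ball hle) h)⟩⟩
  · by_contra hnee
    exact hmax' (Metric.ball c s) hBhatBall
      ⟨hss, ⟨Metric.ball_subset_ball hle,
        fun h => hnee (subset_antisymm h (Metric.ball_subset_ball hle))⟩⟩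
end

section
/- Every partition of a nonempty compact ultrametric space X into balls is a standard partition. -/
/-- The standard partitions of the whole space, defined inductively: `{X}` is
standard, and a standard partition remains standard after replacing one of its
members having at least two points by its maximal proper subballs. -/
inductive IsStandardPartition {X : Type*} [MetricSpace X] : Set (Set X) → Prop where
  | base : IsStandardPartition {Set.univ}
  | step (P : Set (Set X)) (B : Set X) :
      IsStandardPartition P → B ∈ P → IsBall B → (∃ a ∈ B, ∃ b ∈ B, a ≠ b) →
      IsStandardPartition ((P \ {B}) ∪ {B' : Set X | IsMaxSubball B' B})

set_option linter.unusedSectionVars false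

open Metric Set IsUltrametricDist

namespace StdPartProof

variable {X : Type*} [MetricSpace X] [IsUltrametricDist X]

lemma dist_eq_of_lt {c x y : X} (h : dist c x < dist c y) : dist x y = dist c y := by
  have hne : dist x c ≠ dist c y := by rw [dist_comm]; exact h.ne
  rw [dist_eq_max_of_dist_ne_dist x c y hne, dist_comm x c, max_eq_right h.le]

lemma subset_of_ssubset_ball {c z : X} {δ : ℝ} (hδ : 0 < δ) (hz : dist c z ≤ δ)
    {B'' : Set X} (hB'' : IsBall B'') (hsub : ball z δ ⊂ B'') :
    closedBall c δ ⊆ B'' := by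
  obtain ⟨c'', r'', hr'', rfl⟩ := hB''
  have hzmem : z ∈ ball c'' r'' := hsub.subset (mem_ball_self hδ)
  have hEq : ball c'' r'' = ball z r'' := ball_eq_of_mem hzmem
  rw [hEq] at hsub ⊢
  obtain ⟨w, hwB, hwn⟩ := exists_of_ssubset hsub
  have h1 : δ ≤ dist w z := by
    by_contra h
    exact hwn (mem_ball.mpr (not_le.mp h))
  have hδr : δ < r'' := lt_of_le_of_lt h1 (mem_ball.mp hwB)
  intro u hu
  have h2 : dist u z ≤ max (dist u c) (dist c z) := _root_.dist_triangle_max u c z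
  have h3 : dist u c ≤ δ := mem_closedBall.mp hu
  exact mem_ball.mpr (lt_of_le_of_lt (h2.trans (max_le h3 hz)) hδr)

lemma ball_ssubset_closedBall {c y z : X} {δ : ℝ} (hδ : 0 < δ) (hy : dist c y = δ)
    (hz : dist c z ≤ δ) : ball z δ ⊂ closedBall c δ := by
  constructor
  · intro u hu
    have h2 : dist u c ≤ max (dist u z) (dist z c) := _root_.dist_triangle_max u z c
    have : dist u z < δ := mem_ball.mp hu
    exact mem_closedBall.mpr (h2.trans (max_le this.le ((dist_comm z c) ▸ hz)))
  · intro hsup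
    rcases eq_or_lt_of_le hz with h | h
    · have : dist c z < δ := mem_ball.mp (hsup (mem_closedBall_self hδ.le))
      exact absurd h (by linarith)
    · have hzy : dist z y = δ := by
        rw [← hy]; exact dist_eq_of_lt (by rw [hy]; exact h)
      have hymem : y ∈ closedBall c δ := by
        rw [mem_closedBall, dist_comm, hy]
      have h2 : dist y z < δ := mem_ball.mp (hsup hymem)
      rw [dist_comm] at h2
      exact absurd hzy (by linarith)

lemma isMaxSubball_iff {c y : X} {δ : ℝ} (hδ : 0 < δ) (hy : dist c y = δ) {B' : Set X} :
    IsMaxSubball B' (closedBall c δ) ↔ ∃ z, dist c z ≤ δ ∧ B' = ball z δ := by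
  constructor
  · rintro ⟨⟨c', r', hr', rfl⟩, hsub, hmax⟩
    have hc' : dist c c' ≤ δ := by
      have := mem_closedBall.mp (hsub.subset (mem_ball_self hr'))
      rwa [dist_comm] at this
    refine ⟨c', hc', ?_⟩
    have hsub2 : ball c' r' ⊆ ball c' δ := by
      by_contra h
      obtain ⟨w, hw1, hw2⟩ := not_subset.mp h
      have h1 : δ ≤ dist w c' := le_of_not_gt (fun hlt => hw2 (mem_ball.mpr hlt))
      have hδr : δ < r' := lt_of_le_of_lt h1 (mem_ball.mp hw1)
      have hbig : closedBall c δ ⊆ ball c' r' := by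
        intro u hu
        have h2 : dist u c' ≤ max (dist u c) (dist c c') := _root_.dist_triangle_max u c c'
        exact mem_ball.mpr (lt_of_le_of_lt (h2.trans (max_le (mem_closedBall.mp hu) hc')) hδr)
      exact hsub.not_subset hbig
    have hss := ball_ssubset_closedBall hδ hy hc'
    by_cases heq : ball c' r' = ball c' δ
    · exact heq
    · exact absurd ⟨ssubset_of_subset_of_ne hsub2 heq, hss⟩
        (hmax (ball c' δ) ⟨c', δ, hδ, rfl⟩)
  · rintro ⟨z, hz, rfl⟩
    refine ⟨⟨z, δ, hδ, rfl⟩, ball_ssubset_closedBall hδ hy hz, ?_⟩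
    rintro B'' hB'' ⟨h1, h2⟩
    exact h2.not_subset (subset_of_ssubset_ball hδ hz hB'' h1)

lemma exists_gap [CompactSpace X] (c : X) {δ : ℝ} (hδ : 0 < δ) :
    ∃ ε > 0, ∀ y : X, dist c y < δ + ε → dist c y ≤ δ := by
  by_cases hne : {y : X | δ < dist c y}.Nonempty
  · set s : Set X := {y : X | δ < dist c y} with hs
    have hclos : IsCompact (closure s) := isClosed_closure.isCompact
    have hcont : Continuous fun y : X => dist c y := continuous_const.dist continuous_id
    obtain ⟨a, ha, hmin⟩ := hclos.exists_isMinOn hne.closure hcont.continuousOn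
    have haδ : δ ≤ dist c a := by
      have : closure s ⊆ {y : X | δ ≤ dist c y} :=
        closure_minimal (fun y hy => show δ ≤ dist c y from le_of_lt hy)
          (isClosed_le continuous_const (continuous_const.dist continuous_id))
      exact this ha
    have hgt : δ < dist c a := by
      rcases lt_or_eq_of_le haδ with h | h
      · exact h
      · exfalso
        have hdisj : ∀ y ∈ s, y ∉ ball a δ := by
          intro y hy
          have hy' : δ < dist c y := hy
          have h1 : dist c a < dist c y := by rw [← h]; exact hy' 
          have h2 : dist a y = dist c y := dist_eq_of_lt h1
          rw [mem_ball, dist_comm, h2]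
          exact not_lt.mpr (le_of_lt hy)
        obtain ⟨y, hy1, hy2⟩ := mem_closure_iff.mp ha (ball a δ) isOpen_ball
          (mem_ball_self hδ)
        exact hdisj y hy2 hy1
    refine ⟨dist c a - δ, by linarith, ?_⟩
    intro y hy
    by_contra h
    push_neg at h
    have : dist c a ≤ dist c y := isMinOn_iff.mp hmin y (subset_closure (show y ∈ s from h))
    linarith
  · exact ⟨1, one_pos, fun y _ => le_of_not_gt fun h => hne ⟨y, h⟩⟩

lemma finite_of_partition [CompactSpace X] (P : Set (Set X))
    (hball : ∀ B ∈ P, IsBall B)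
    (hdisj : P.Pairwise fun A A' => Disjoint A A')
    (hcov : ⋃₀ P = univ) : P.Finite := by
  have hopen : ∀ B ∈ P, IsOpen B := by
    rintro B hB
    obtain ⟨c, r, hr, rfl⟩ := hball B hB
    exact isOpen_ball
  have hcover : (univ : Set X) ⊆ ⋃ B : P, (B : Set X) := by
    rw [← sUnion_eq_iUnion, hcov]
  obtain ⟨t, ht⟩ := isCompact_univ.elim_finite_subcover (fun B : P => (B : Set X))
    (fun B => hopen B B.2) hcover
  apply Set.Finite.subset (t.finite_toSet.image Subtype.val)
  intro A hA
  obtain ⟨c, r, hr, hAr⟩ := hball A hA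
  have hc : c ∈ A := by rw [hAr]; exact mem_ball_self hr
  have hmem := ht (mem_univ c)
  simp only [mem_iUnion] at hmem
  obtain ⟨B, hBt, hcB⟩ := hmem
  have hAB : A = (B : Set X) := by
    rcases eq_or_ne A (B : Set X) with h | h
    · exact h
    · exact absurd hcB (Set.disjoint_left.mp (hdisj hA B.2 h) hc)
  exact ⟨B, hBt, hAB.symm⟩

end StdPartProof

open StdPartProof in
/-- Every partition of a nonempty compact ultrametric space into balls is a
standard partition. -/
theorem partition_into_balls_is_standard
    {X : Type*} [MetricSpace X] [CompactSpace X] [Nonempty X]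
    (hX : ∀ x y z : X, dist x y ≤ max (dist x z) (dist z y))
    (P : Set (Set X)) (hball : ∀ B ∈ P, IsBall B)
    (hdisj : P.Pairwise (fun A A' => Disjoint A A'))
    (hcov : ⋃₀ P = Set.univ) :
    IsStandardPartition P := by
  classical
  have : IsUltrametricDist X := ⟨fun x y z => hX x z y⟩
  clear hX
  suffices H : ∀ n (P : Set (Set X)), P.ncard ≤ n → (∀ B ∈ P, IsBall B) →
      (P.Pairwise fun A A' => Disjoint A A') → ⋃₀ P = Set.univ → IsStandardPartition P by
    exact H P.ncard P le_rfl hball hdisj hcov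
  clear hball hdisj hcov P
  intro n
  induction n with
  | zero =>
    intro P hn hball hdisj hcov
    have hfin := finite_of_partition P hball hdisj hcov
    have hPe : P = ∅ := (Set.ncard_eq_zero hfin).mp (Nat.le_zero.mp hn)
    rw [hPe] at hcov
    simp only [Set.sUnion_empty] at hcov
    exact absurd hcov.symm (Set.univ_nonempty (α := X)).ne_empty
  | succ n ih =>
    intro P hn hball hdisj hcov
    have hfin := finite_of_partition P hball hdisj hcov
    by_cases huniv : ∀ A ∈ P, A = Set.univ
    · have hPne : P.Nonempty := by
        rcases Set.eq_empty_or_nonempty P with h | h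
        · exfalso
          rw [h] at hcov
          simp only [Set.sUnion_empty] at hcov
          exact absurd hcov.symm (Set.univ_nonempty (α := X)).ne_empty
        · exact h
      have hPu : P = {Set.univ} := by
        apply Set.Subset.antisymm
        · intro A hA
          exact huniv A hA
        · obtain ⟨A, hA⟩ := hPne
          intro B hB
          rw [Set.mem_singleton_iff] at hB
          rw [hB, ← huniv A hA]
          exact hA
      rw [hPu]
      exact IsStandardPartition.base
    · push_neg at huniv
      obtain ⟨B₁, hB₁P, hB₁ne⟩ := huniv
      have hnuniv : ∀ A ∈ P, A ≠ Set.univ := by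
        intro A hA hAu
        rcases eq_or_ne A B₁ with rfl | hne
        · exact hB₁ne hAu
        · obtain ⟨c₁, r₁, hr₁, hB₁r⟩ := hball B₁ hB₁P
          have hc₁ : c₁ ∈ B₁ := by rw [hB₁r]; exact mem_ball_self hr₁
          exact Set.disjoint_left.mp (hdisj hA hB₁P hne)
            (by rw [hAu]; exact Set.mem_univ c₁) hc₁
      choose! ctr rad hcr using hball
      set f : Set X → ℝ := fun B => Metric.infDist (ctr B) Bᶜ with hf
      obtain ⟨B₀, hB₀P, hB₀min⟩ := Set.exists_min_image P f hfin ⟨B₁, hB₁P⟩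
      obtain ⟨hr, hBr⟩ := hcr B₀ hB₀P
      set c := ctr B₀ with hc
      set r := rad B₀ with hrdef
      have hKne : B₀ᶜ.Nonempty := Set.nonempty_compl.mpr (hnuniv B₀ hB₀P)
      have hKclosed : IsClosed B₀ᶜ := by
        rw [hBr]; exact (isOpen_ball).isClosed_compl
      have hKcompact : IsCompact B₀ᶜ := hKclosed.isCompact
      set δ := Metric.infDist c B₀ᶜ with hδdef
      obtain ⟨y, hyK, hyd⟩ := hKcompact.exists_infDist_eq_dist hKne c
      have hcy : dist c y = δ := hyd.symm
      have hrδ : r ≤ δ := by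
        rw [← hcy]
        have : y ∉ ball c r := by rw [← hBr]; exact hyK
        rw [mem_ball, dist_comm] at this
        exact le_of_not_gt this
      have hδpos : 0 < δ := lt_of_lt_of_le hr hrδ
      have hB₀δ : B₀ = ball c δ := by
        apply Set.Subset.antisymm
        · rw [hBr]; exact ball_subset_ball hrδ
        · intro u hu
          by_contra h
          have h1 : δ ≤ dist c u := Metric.infDist_le_dist_of_mem (show u ∈ B₀ᶜ from h)
          rw [mem_ball, dist_comm] at hu
          linarith
      obtain ⟨ε, hε, hgap⟩ := exists_gap c hδpos
      set Bhat := closedBall c δ with hBhatdef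
      have hBhatBall : Bhat = ball c (δ + ε) := by
        apply Set.Subset.antisymm
        · intro u hu
          rw [mem_closedBall] at hu
          rw [mem_ball]
          linarith
        · intro u hu
          rw [mem_ball] at hu
          rw [mem_closedBall, dist_comm]
          exact hgap u (by rw [dist_comm]; exact hu)
      set S := {B' : Set X | IsMaxSubball B' Bhat} with hS
      have hSchar : ∀ B', B' ∈ S ↔ ∃ z, dist c z ≤ δ ∧ B' = ball z δ := by
        intro B'
        rw [hS, Set.mem_setOf_eq, hBhatdef]
        exact isMaxSubball_iff hδpos hcy
      have hfB₀ : f B₀ = δ := rfl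
      have hSP : S ⊆ P := by
        intro M hM
        obtain ⟨z, hz, rfl⟩ := (hSchar M).mp hM
        have hzP : z ∈ ⋃₀ P := by rw [hcov]; exact Set.mem_univ z
        obtain ⟨A, hAP, hzA⟩ := hzP
        obtain ⟨hrA, hArepr⟩ := hcr A hAP
        have hz0 : z ∈ ball (ctr A) (rad A) := by rw [← hArepr]; exact hzA
        have hAz : A = ball z (rad A) := by
          nth_rewrite 1 [hArepr]
          exact ball_eq_of_mem hz0
        rcases le_total (rad A) δ with hle | hle
        · have hsub : A ⊆ ball z δ := by rw [hAz]; exact ball_subset_ball hle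
          rcases eq_or_ne A (ball z δ) with h | h
          · rw [← h]; exact hAP
          · exfalso
            obtain ⟨w, hwM, hwA⟩ := Set.exists_of_ssubset (ssubset_of_subset_of_ne hsub h)
            have hcA : ctr A ∈ A := by
              have h0 : ctr A ∈ ball (ctr A) (rad A) := mem_ball_self hrA
              rwa [← hArepr] at h0
            have h1 : f A ≤ dist (ctr A) w := Metric.infDist_le_dist_of_mem hwA
            have h2 : dist (ctr A) w < δ := by
              have hu : dist (ctr A) z < δ := by
                have := hsub hcA
                rwa [mem_ball] at this
              have htri := _root_.dist_triangle_max (ctr A) z w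
              have hzw : dist z w < δ := by
                have := hwM
                rw [mem_ball, dist_comm] at this
                exact this
              exact lt_of_le_of_lt htri (max_lt hu hzw)
            have h3 : δ ≤ f A := by rw [← hfB₀]; exact hB₀min A hAP
            linarith
        · have hsub : ball z δ ⊆ A := by rw [hAz]; exact ball_subset_ball hle
          rcases eq_or_ne (ball z δ) A with h | h
          · rw [h]; exact hAP
          · exfalso
            have hA_ball : IsBall A := ⟨z, rad A, hrA, hAz⟩
            have hbig : Bhat ⊆ A :=
              subset_of_ssubset_ball hδpos hz hA_ball (ssubset_of_subset_of_ne hsub h)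
            have hyBhat : y ∈ Bhat := by
              rw [hBhatdef, mem_closedBall, dist_comm, hcy]
            rcases eq_or_ne A B₀ with rfl | hne
            · exact hyK (hbig hyBhat)
            · have hcB₀ : c ∈ B₀ := by rw [hB₀δ]; exact mem_ball_self hδpos
              have hcA' : c ∈ A := hbig (mem_closedBall_self hδpos.le)
              exact Set.disjoint_left.mp (hdisj hAP hB₀P hne) hcA' hcB₀
      have hB₀S : B₀ ∈ S := (hSchar B₀).mpr ⟨c, by simp [hδpos.le], hB₀δ⟩
      have hyS : ball y δ ∈ S := (hSchar _).mpr ⟨y, le_of_eq hcy, rfl⟩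
      have hyne : ball y δ ≠ B₀ := by
        intro h
        exact hyK (h ▸ mem_ball_self hδpos)
      set P' := insert Bhat (P \ S) with hP'
      have hBhatIsBall : IsBall Bhat := ⟨c, δ + ε, by linarith, hBhatBall⟩
      have hball' : ∀ B ∈ P', IsBall B := by
        rintro B hB
        rcases hB with rfl | ⟨hBP, -⟩
        · exact hBhatIsBall
        · exact ⟨ctr B, rad B, (hcr B hBP).1, (hcr B hBP).2⟩
      have hdisjBhat : ∀ A ∈ P \ S, Disjoint Bhat A := by
        rintro A ⟨hAP, hAS⟩
        rw [Set.disjoint_left]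
        intro u huB huA
        have hcu : dist c u ≤ δ := by
          rw [hBhatdef, mem_closedBall] at huB
          rw [dist_comm]; exact huB
        have huS : ball u δ ∈ S := (hSchar _).mpr ⟨u, hcu, rfl⟩
        have huP : ball u δ ∈ P := hSP huS
        rcases eq_or_ne A (ball u δ) with rfl | hne
        · exact hAS huS
        · exact Set.disjoint_left.mp (hdisj hAP huP hne) huA (mem_ball_self hδpos)
      have hdisj' : P'.Pairwise fun A A' => Disjoint A A' := by
        rintro A hA A' hA' hne
        rcases hA with rfl | hA
        · rcases hA' with rfl | hA'
          · exact absurd rfl hne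
          · exact hdisjBhat A' hA'
        · rcases hA' with rfl | hA'
          · exact (hdisjBhat A hA).symm
          · exact hdisj hA.1 hA'.1 hne
      have hSU : ⋃₀ S = Bhat := by
        apply Set.Subset.antisymm
        · rintro u ⟨M, hM, huM⟩
          exact (show IsMaxSubball M Bhat from hM).2.1.subset huM
        · intro u hu
          have hcu : dist c u ≤ δ := by
            rw [hBhatdef, mem_closedBall] at hu
            rw [dist_comm]; exact hu
          exact ⟨ball u δ, (hSchar _).mpr ⟨u, hcu, rfl⟩, mem_ball_self hδpos⟩
      have hcov' : ⋃₀ P' = Set.univ := by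
        rw [hP', Set.sUnion_insert, ← hSU, ← Set.sUnion_union,
          Set.union_diff_cancel hSP, hcov]
      have hSfin : S.Finite := hfin.subset hSP
      have hS2 : 2 ≤ S.ncard := by
        have : 1 < S.ncard := (Set.one_lt_ncard hSfin).mpr
          ⟨ball y δ, hyS, B₀, hB₀S, hyne⟩
        omega
      have hcard' : P'.ncard ≤ n := by
        have h1 : P'.ncard ≤ (P \ S).ncard + 1 := Set.ncard_insert_le _ _
        have h2 : (P \ S).ncard = P.ncard - S.ncard := Set.ncard_diff hSP hSfin
        have h3 : S.ncard ≤ P.ncard := Set.ncard_le_ncard hSP hfin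
        omega
      have hstd' := ih P' hcard' hball' hdisj' hcov'
      have hyBhat : y ∈ Bhat := by
        rw [hBhatdef, mem_closedBall, dist_comm, hcy]
      have h2pts : ∃ a ∈ Bhat, ∃ b ∈ Bhat, a ≠ b := by
        refine ⟨c, mem_closedBall_self hδpos.le, y, hyBhat, ?_⟩
        intro h
        rw [← h, dist_self] at hcy
        linarith
      have hstep := IsStandardPartition.step P' Bhat hstd' (Set.mem_insert _ _)
        hBhatIsBall h2pts
      have hBhatnotin : Bhat ∉ P \ S := by
        rintro ⟨hBP, hBS⟩
        have hne : Bhat ≠ B₀ := by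
          intro h
          exact hyK (h ▸ hyBhat)
        exact Set.disjoint_left.mp (hdisj hBP hB₀P hne)
          (mem_closedBall_self hδpos.le) (by rw [hB₀δ]; exact mem_ball_self hδpos)
      have hfinal : (P' \ {Bhat}) ∪ {B' : Set X | IsMaxSubball B' Bhat} = P := by
        have hstep1 : P' \ {Bhat} = P \ S := by
          ext A
          simp only [hP', Set.mem_diff, Set.mem_insert_iff, Set.mem_singleton_iff]
          constructor
          · rintro ⟨h1 | h1, h2⟩
            · exact absurd h1 h2
            · exact h1
          · intro h
            exact ⟨Or.inr h, fun hh => hBhatnotin (hh ▸ h)⟩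
        rw [hstep1, ← hS]
        exact Set.diff_union_of_subset hSP
      rw [hfinal] at hstep
      exact hstep
end

section
/- Let X be a compact ultrametric space and let B_1, B_2 be disjoint balls of X. Let B be the unique smallest ball of X containing B_1 ∪ B_2. Then there exist distinct maximal proper subballs A_1 ≠ A_2 of B with B_1 ⊆ A_1 and B_2 ⊆ A_2. -/
lemma ultra_ball_eq {X : Type*} [MetricSpace X]
    (hX : ∀ x y z : X, dist x y ≤ max (dist x z) (dist z y))
    {x z : X} {s : ℝ} (h : dist x z < s) :
    Metric.ball z s = Metric.ball x s := by
  ext y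
  simp only [Metric.mem_ball]
  constructor
  · intro hy
    calc dist y x ≤ max (dist y z) (dist z x) := hX y x z
    _ < s := max_lt hy (by rwa [dist_comm])
  · intro hy
    calc dist y z ≤ max (dist y x) (dist x z) := hX y z x
    _ < s := max_lt hy h

/-- If `B₁, B₂` are disjoint balls of a compact ultrametric space and `B` is
the smallest ball containing `B₁ ∪ B₂`, then `B₁` and `B₂` lie in distinct
maximal proper subballs of `B`. -/
theorem disjoint_balls_in_distinct_maximal_subballs
    {X : Type*} [MetricSpace X] [CompactSpace X]
    (hX : ∀ x y z : X, dist x y ≤ max (dist x z) (dist z y))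
    (B₁ B₂ : Set X) (h₁ : IsBall B₁) (h₂ : IsBall B₂) (hd : Disjoint B₁ B₂)
    (B : Set X) (hB : IsBall B) (hsub : B₁ ∪ B₂ ⊆ B)
    (hmin : ∀ B' : Set X, IsBall B' → B₁ ∪ B₂ ⊆ B' → B ⊆ B') :
    ∃ A₁ A₂ : Set X, IsMaxSubball A₁ B ∧ IsMaxSubball A₂ B ∧ A₁ ≠ A₂ ∧
      B₁ ⊆ A₁ ∧ B₂ ⊆ A₂ := by
  obtain ⟨c₁, r₁, hr₁, rfl⟩ := h₁
  obtain ⟨c₂, r₂, hr₂, rfl⟩ := h₂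
  obtain ⟨c, rB, hrB, rfl⟩ := hB
  have hc₁B : c₁ ∈ Metric.ball c rB := hsub (Or.inl (Metric.mem_ball_self hr₁))
  have hc₂B : c₂ ∈ Metric.ball c rB := hsub (Or.inr (Metric.mem_ball_self hr₂))
  -- the ball B is closed
  have hBclosed : IsClosed (Metric.ball c rB) := by
    rw [← isOpen_compl_iff, Metric.isOpen_iff]
    intro y hy
    refine ⟨rB, hrB, fun z hz => ?_⟩
    simp only [Set.mem_compl_iff, Metric.mem_ball] at *
    intro hzc
    exact hy (lt_of_le_of_lt (hX y c z)
      (max_lt (by rwa [dist_comm] at hz) hzc))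
  have hBcpt : IsCompact (Metric.ball c rB) := hBclosed.isCompact
  -- diameter of B is attained
  obtain ⟨⟨u, v⟩, huv, hmax⟩ := (hBcpt.prod hBcpt).exists_isMaxOn
    ⟨⟨c₁, c₂⟩, hc₁B, hc₂B⟩ (continuous_dist.continuousOn)
  obtain ⟨huB, hvB⟩ : u ∈ Metric.ball c rB ∧ v ∈ Metric.ball c rB := huv
  set t := dist u v with ht
  have hmax' : ∀ x ∈ Metric.ball c rB, ∀ y ∈ Metric.ball c rB, dist x y ≤ t :=
    fun x hx y hy => hmax (Set.mk_mem_prod hx hy)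
  -- basic inequalities
  have hc₂n₁ : c₂ ∉ Metric.ball c₁ r₁ := fun h =>
    Set.disjoint_left.mp hd h (Metric.mem_ball_self hr₂)
  have hc₁n₂ : c₁ ∉ Metric.ball c₂ r₂ := fun h =>
    Set.disjoint_right.mp hd h (Metric.mem_ball_self hr₁)
  have hr₁R : r₁ ≤ dist c₁ c₂ := by
    by_contra h
    exact hc₂n₁ (by simpa [Metric.mem_ball, dist_comm] using lt_of_not_ge h)
  have hr₂R : r₂ ≤ dist c₁ c₂ := by
    by_contra h
    exact hc₁n₂ (by simpa [Metric.mem_ball] using lt_of_not_ge h)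
  have hRt : dist c₁ c₂ ≤ t := hmax' c₁ hc₁B c₂ hc₂B
  have ht0 : 0 < t := lt_of_lt_of_le hr₁ (le_trans hr₁R hRt)
  have htrB : t < rB := by
    simp only [Metric.mem_ball] at huB hvB
    calc t ≤ max (dist u c) (dist c v) := hX u v c
    _ < rB := max_lt huB (by rwa [dist_comm])
  -- every ball(x, t) with x ∈ B is a maximal proper subball of B
  have key : ∀ x ∈ Metric.ball c rB,
      IsMaxSubball (Metric.ball x t) (Metric.ball c rB) := by
    intro x hx
    have hsubB : Metric.ball x t ⊆ Metric.ball c rB := by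
      intro z hz
      simp only [Metric.mem_ball] at *
      calc dist z c ≤ max (dist z x) (dist x c) := hX z c x
      _ < rB := max_lt (lt_trans hz htrB) hx
    -- a point of B at distance exactly t from x
    have hexists : ∃ w ∈ Metric.ball c rB, dist x w = t := by
      rcases le_max_iff.mp (hX u v x) with h | h
      · exact ⟨u, huB, le_antisymm (hmax' x hx u huB)
          (by rw [dist_comm x u]; exact h)⟩
      · exact ⟨v, hvB, le_antisymm (hmax' x hx v hvB) h⟩
    obtain ⟨w, hwB, hw⟩ := hexists
    have hproper : Metric.ball x t ⊂ Metric.ball c rB := by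
      refine ⟨hsubB, fun hle => ?_⟩
      have : w ∈ Metric.ball x t := hle hwB
      simp only [Metric.mem_ball, dist_comm] at this
      exact absurd hw (ne_of_lt this)
    refine ⟨⟨x, t, ht0, rfl⟩, hproper, ?_⟩
    rintro B'' ⟨z, s, hs, rfl⟩ ⟨h1, h2⟩
    have hxz : x ∈ Metric.ball z s := h1.1 (Metric.mem_ball_self ht0)
    rw [ultra_ball_eq hX (Metric.mem_ball.mp hxz)] at h1 h2
    obtain ⟨y, hy1, hy2⟩ := Set.exists_of_ssubset h1
    simp only [Metric.mem_ball, not_lt] at hy1 hy2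
    have hts : t < s := lt_of_le_of_lt hy2 hy1
    refine h2.2 (fun w' hw' => ?_)
    simp only [Metric.mem_ball]
    calc dist w' x ≤ t := by rw [dist_comm]; exact hmax' x hx w' hw'
    _ < s := hts
  refine ⟨Metric.ball c₁ t, Metric.ball c₂ t, key c₁ hc₁B, key c₂ hc₂B, ?_, ?_, ?_⟩
  · intro heq
    have : Metric.ball c rB ⊆ Metric.ball c₁ t := by
      refine hmin _ ⟨c₁, t, ht0, rfl⟩ ?_
      rintro y (hy | hy)
      · exact Metric.mem_ball.mpr
          (lt_of_lt_of_le (Metric.mem_ball.mp hy) (le_trans hr₁R hRt))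
      · rw [heq]
        exact Metric.mem_ball.mpr
          (lt_of_lt_of_le (Metric.mem_ball.mp hy) (le_trans hr₂R hRt))
    exact (key c₁ hc₁B).2.1.2 this
  · intro y hy
    simp only [Metric.mem_ball] at *
    exact lt_of_lt_of_le hy (le_trans hr₁R hRt)
  · intro y hy
    simp only [Metric.mem_ball] at *
    exact lt_of_lt_of_le hy (le_trans hr₂R hRt)
end

section
/- Let X be a compact ultrametric space equipped with a ball order. For disjoint balls B_1, B_2 of X, declare B_1 < B_2 if and only if A_1 <_B A_2, where B is the smallest ball of X containing B_1 ∪ B_2 and A_1, A_2 are the distinct maximal proper subballs of B with B_1 ⊆ A_1 and B_2 ⊆ A_2. Then for any collection C of pairwise disjoint balls of X, the relation < is a strict linear order on C (it is transitive, and for distinct members B_1, B_2 of C exactly one of B_1 < B_2 and B_2 < B_1 holds). -/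
/-- `B` is the smallest ball containing `B₁ ∪ B₂`. -/
def IsSmallestBall {X : Type*} [MetricSpace X] (B₁ B₂ B : Set X) : Prop :=
  IsBall B ∧ B₁ ∪ B₂ ⊆ B ∧ ∀ B' : Set X, IsBall B' → B₁ ∪ B₂ ⊆ B' → B ⊆ B'

/-- The order induced on disjoint balls by a ball order `lt`: `B₁ < B₂` iff
`A₁ <_B A₂`, where `B` is the smallest ball containing `B₁ ∪ B₂` and
`A₁, A₂` are the maximal proper subballs of `B` containing `B₁` and `B₂`
respectively. -/
def BallLT {X : Type*} [MetricSpace X] (lt : Set X → Set X → Set X → Prop)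
    (B₁ B₂ : Set X) : Prop :=
  ∃ B A₁ A₂ : Set X, IsSmallestBall B₁ B₂ B ∧ IsMaxSubball A₁ B ∧
    IsMaxSubball A₂ B ∧ B₁ ⊆ A₁ ∧ B₂ ⊆ A₂ ∧ lt B A₁ A₂

set_option linter.unusedSectionVars false

namespace BallOrderAux

open Metric IsUltrametricDist

variable {X : Type*} [MetricSpace X] [IsUltrametricDist X]

lemma nonempty_of_isBall {B : Set X} (h : IsBall B) : B.Nonempty := by
  obtain ⟨c, r, hr, rfl⟩ := h
  exact ⟨c, by simpa using hr⟩

lemma recenter {B : Set X} (h : IsBall B) {x : X} (hx : x ∈ B) :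
    ∃ r : ℝ, 0 < r ∧ B = Metric.ball x r := by
  obtain ⟨c, r, hr, rfl⟩ := h
  exact ⟨r, hr, IsUltrametricDist.ball_eq_of_mem hx⟩

variable [CompactSpace X]

/-- In a compact ultrametric space, a closed ball of positive radius is an open ball. -/
lemma closedBall_eq_ball (x : X) {d : ℝ} (hd : 0 < d) :
    ∃ s : ℝ, d < s ∧ Metric.closedBall x d = Metric.ball x s := by
  by_cases h : ((Metric.closedBall x d)ᶜ).Nonempty
  · have hcl : IsClosed ((Metric.closedBall x d)ᶜ) :=
      (IsUltrametricDist.isOpen_closedBall x hd.ne').isClosed_compl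
    obtain ⟨z₀, hz₀, hmin⟩ := hcl.isCompact.exists_isMinOn h
      (Continuous.dist continuous_const continuous_id).continuousOn
      (f := fun z => dist x z)
    have hz₀' : d < dist x z₀ := by
      rw [dist_comm]
      simpa [Metric.mem_closedBall, not_le] using hz₀
    refine ⟨dist x z₀, hz₀', ?_⟩
    ext z
    simp only [Metric.mem_closedBall, Metric.mem_ball]
    constructor
    · intro hz
      calc dist z x ≤ d := hz
        _ < dist x z₀ := hz₀'
    · intro hz
      by_contra hzd
      push_neg at hzd
      have hzS : z ∈ (Metric.closedBall x d)ᶜ := by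
        simpa [Metric.mem_closedBall, not_le] using hzd
      have h2 : dist x z₀ ≤ dist x z := hmin hzS
      rw [dist_comm z x] at hz
      linarith
  · refine ⟨d + 1, by linarith, ?_⟩
    have : ∀ z : X, z ∈ Metric.closedBall x d := by
      intro z
      by_contra hz
      exact h ⟨z, hz⟩
    ext z
    simp only [Metric.mem_closedBall, Metric.mem_ball]
    constructor
    · intro hz; linarith
    · intro _; simpa [Metric.mem_closedBall] using this z

lemma isBall_closedBall (x : X) {d : ℝ} (hd : 0 < d) : IsBall (Metric.closedBall x d) := by
  obtain ⟨s, hs, heq⟩ := closedBall_eq_ball x hd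
  exact ⟨x, s, hd.trans hs, heq⟩

/-- Existence of the maximal proper subball of `B` containing `x`. -/
lemma maxSubball_exists {B : Set X} (hB : IsBall B) {x y : X} (hx : x ∈ B) (hy : y ∈ B)
    (hxy : x ≠ y) :
    ∃ m : ℝ, 0 < m ∧ (∀ z ∈ B, dist x z ≤ m) ∧ (∃ w ∈ B, dist x w = m) ∧
      IsMaxSubball (Metric.ball x m) B := by
  obtain ⟨r, hr, rfl⟩ := recenter hB hx
  have hclosed : IsClosed (Metric.ball x r) := IsUltrametricDist.isClosed_ball x r
  obtain ⟨w, hw, hmax⟩ := hclosed.isCompact.exists_isMaxOn ⟨x, hx⟩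
    (Continuous.dist continuous_const continuous_id).continuousOn (f := fun z => dist x z)
  set m := dist x w with hm
  have hyw : dist x y ≤ m := hmax hy
  have hm0 : 0 < m := lt_of_lt_of_le (dist_pos.mpr hxy) hyw
  have hble : ∀ z ∈ Metric.ball x r, dist x z ≤ m := fun z hz => hmax hz
  have hmr : m < r := by rw [hm, dist_comm]; exact hw
  refine ⟨m, hm0, hble, ⟨w, hw, rfl⟩, ⟨x, m, hm0, rfl⟩, ?_, ?_⟩
  · constructor
    · exact Metric.ball_subset_ball hmr.le
    · intro hsub
      have hww := hsub hw
      rw [Metric.mem_ball, dist_comm, ← hm] at hww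
      exact lt_irrefl m hww
  · rintro B'' hB'' ⟨h1, h2⟩
    have hxB'' : x ∈ B'' := h1.1 (Metric.mem_ball_self hm0)
    obtain ⟨s, hs, rfl⟩ := recenter hB'' hxB''
    obtain ⟨v, hv, hvm⟩ := Set.exists_of_ssubset h1
    rw [Metric.mem_ball] at hv
    rw [Metric.mem_ball, not_lt, dist_comm] at hvm
    obtain ⟨u, hu, hum⟩ := Set.exists_of_ssubset h2
    have hub : dist x u ≤ m := hble u hu
    rw [Metric.mem_ball] at hum
    rw [dist_comm v x] at hv
    exact hum (by rw [dist_comm]; exact lt_of_le_of_lt hub (lt_of_le_of_lt hvm hv))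

/-- Uniqueness of the maximal proper subball containing a point. -/
lemma maxSubball_unique {B A : Set X} {x : X} {m : ℝ}
    (hms : IsMaxSubball (Metric.ball x m) B) (hA : IsMaxSubball A B) (hxA : x ∈ A) :
    A = Metric.ball x m := by
  obtain ⟨s, hs, rfl⟩ := recenter hA.1 hxA
  rcases le_total s m with h | h
  · rcases (Metric.ball_subset_ball (x := x) h).ssubset_or_eq with hss | heq
    · exact absurd ⟨hss, hms.2.1⟩ (hA.2.2 _ hms.1)
    · exact heq
  · rcases (Metric.ball_subset_ball (x := x) h).ssubset_or_eq with hss | heq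
    · exact absurd ⟨hss, hA.2.1⟩ (hms.2.2 _ hA.1)
    · exact heq.symm

/-- `ball x d` is a maximal proper subball of `closedBall c d` when `x` is in the
closed ball and some point of the closed ball is at distance `≥ d` from `x`. -/
lemma isMaxSubball_ball {c x : X} {d : ℝ} (hd : 0 < d)
    (hx : x ∈ Metric.closedBall c d) (hw : ∃ w ∈ Metric.closedBall c d, d ≤ dist x w) :
    IsMaxSubball (Metric.ball x d) (Metric.closedBall c d) := by
  obtain ⟨w, hwB, hwd⟩ := hw
  have hxw : x ≠ w := by
    rintro rfl
    rw [dist_self] at hwd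
    linarith
  obtain ⟨m, hm0, hble, ⟨w', hw'B, hw'd⟩, hms⟩ :=
    maxSubball_exists (isBall_closedBall c hd) hx hwB hxw
  have hxc : dist x c ≤ d := hx
  have hmd : m = d := by
    apply le_antisymm
    · rw [← hw'd]
      calc dist x w' ≤ max (dist x c) (dist c w') := IsUltrametricDist.dist_triangle_max x c w'
        _ ≤ d := max_le hxc (by rw [dist_comm]; exact hw'B)
    · exact hwd.trans (hble w hwB)
  rwa [hmd] at hms

/-- The closed ball of radius `dist x y` about `x` is the smallest ball containing
two disjoint balls around `x` and `y`. -/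
lemma isSmallestBall_closedBall {B₁ B₂ : Set X} (h1 : IsBall B₁) (h2 : IsBall B₂)
    (hd : Disjoint B₁ B₂) {x y : X} (hx : x ∈ B₁) (hy : y ∈ B₂) :
    B₁ ⊆ Metric.ball x (dist x y) ∧ B₂ ⊆ Metric.ball y (dist x y) ∧
      IsSmallestBall B₁ B₂ (Metric.closedBall x (dist x y)) := by
  have hxy : x ≠ y := hd.ne_of_mem hx hy
  have hd0 : 0 < dist x y := dist_pos.mpr hxy
  obtain ⟨r₁, hr₁, hB₁⟩ := recenter h1 hx
  obtain ⟨r₂, hr₂, hB₂⟩ := recenter h2 hy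
  have hyB₁ : y ∉ B₁ := fun h => hd.ne_of_mem h hy rfl
  have hxB₂ : x ∉ B₂ := fun h => hd.ne_of_mem hx h rfl
  have hr₁d : r₁ ≤ dist x y := by
    by_contra h
    exact hyB₁ (by rw [hB₁]; exact Metric.mem_ball.mpr (by rw [dist_comm]; linarith))
  have hr₂d : r₂ ≤ dist x y := by
    by_contra h
    exact hxB₂ (by rw [hB₂]; exact Metric.mem_ball.mpr (by linarith))
  have hsub1 : B₁ ⊆ Metric.ball x (dist x y) := by
    rw [hB₁]; exact Metric.ball_subset_ball hr₁d
  have hsub2 : B₂ ⊆ Metric.ball y (dist x y) := by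
    rw [hB₂]; exact Metric.ball_subset_ball hr₂d
  have hyc : y ∈ Metric.closedBall x (dist x y) :=
    Metric.mem_closedBall.mpr (dist_comm y x).le
  have hcc : Metric.closedBall x (dist x y) = Metric.closedBall y (dist x y) :=
    IsUltrametricDist.closedBall_eq_of_mem hyc
  refine ⟨hsub1, hsub2, isBall_closedBall x hd0, ?_, ?_⟩
  · apply Set.union_subset
    · exact hsub1.trans (Metric.ball_subset_closedBall)
    · rw [hcc]
      exact hsub2.trans (Metric.ball_subset_closedBall)
  · intro B' hB' hsub
    have hxB' : x ∈ B' := hsub (Set.mem_union_left _ hx)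
    obtain ⟨s, hs, rfl⟩ := recenter hB' hxB'
    have hyB' : y ∈ Metric.ball x s := hsub (Set.mem_union_right _ hy)
    have : dist x y < s := by simpa [dist_comm] using hyB'
    intro z hz
    exact Metric.mem_ball.mpr (lt_of_le_of_lt hz this)

/-- Key characterization of `BallLT` for disjoint balls. -/
lemma ballLT_iff (lt : Set X → Set X → Set X → Prop) {B₁ B₂ : Set X}
    (h1 : IsBall B₁) (h2 : IsBall B₂) (hd : Disjoint B₁ B₂) {x y : X}
    (hx : x ∈ B₁) (hy : y ∈ B₂) :
    BallLT lt B₁ B₂ ↔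
      lt (Metric.closedBall x (dist x y)) (Metric.ball x (dist x y))
        (Metric.ball y (dist x y)) := by
  have hxy : x ≠ y := hd.ne_of_mem hx hy
  have hd0 : 0 < dist x y := dist_pos.mpr hxy
  obtain ⟨hsub1, hsub2, hsm⟩ := isSmallestBall_closedBall h1 h2 hd hx hy
  have hxc : x ∈ Metric.closedBall x (dist x y) := Metric.mem_closedBall_self hd0.le
  have hyc : y ∈ Metric.closedBall x (dist x y) :=
    Metric.mem_closedBall.mpr (dist_comm y x).le
  have hmsx : IsMaxSubball (Metric.ball x (dist x y)) (Metric.closedBall x (dist x y)) :=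
    isMaxSubball_ball hd0 hxc ⟨y, hyc, le_refl _⟩
  have hmsy : IsMaxSubball (Metric.ball y (dist x y)) (Metric.closedBall x (dist x y)) :=
    isMaxSubball_ball hd0 hyc ⟨x, hxc, by rw [dist_comm]⟩
  constructor
  · rintro ⟨B, A₁, A₂, hsmB, hA₁, hA₂, hs1, hs2, hlt⟩
    have hBeq : B = Metric.closedBall x (dist x y) :=
      subset_antisymm (hsmB.2.2 _ hsm.1 hsm.2.1) (hsm.2.2 _ hsmB.1 hsmB.2.1)
    subst hBeq
    have hA₁eq : A₁ = Metric.ball x (dist x y) := maxSubball_unique hmsx hA₁ (hs1 hx)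
    have hA₂eq : A₂ = Metric.ball y (dist x y) := maxSubball_unique hmsy hA₂ (hs2 hy)
    rwa [hA₁eq, hA₂eq] at hlt
  · intro hlt
    exact ⟨_, _, _, hsm, hmsx, hmsy, hsub1, hsub2, hlt⟩

lemma not_ballLT_self (lt : Set X → Set X → Set X → Prop) {B₀ : Set X} (h : IsBall B₀) :
    ¬ BallLT lt B₀ B₀ := by
  rintro ⟨B, A₁, A₂, ⟨hB, hsub, hmin⟩, hA₁, hA₂, hs1, hs2, -⟩
  have hBB : B ⊆ B₀ := hmin B₀ h (by simp)
  exact hA₁.2.1.not_subset (hBB.trans hs1)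

end BallOrderAux

/-- A ball order on a compact ultrametric space (an assignment to each ball `B`
with at least two points of a strict linear order `lt B` on the maximal proper
subballs of `B`) induces a strict linear order on any collection of pairwise
disjoint balls: the induced relation is transitive, and for distinct members
exactly one of `B₁ < B₂`, `B₂ < B₁` holds. -/
theorem ball_order_induces_linear_order_on_disjoint_balls
    {X : Type*} [MetricSpace X] [CompactSpace X]
    (hX : ∀ x y z : X, dist x y ≤ max (dist x z) (dist z y))
    (lt : Set X → Set X → Set X → Prop)
    (h_irrefl : ∀ B : Set X, IsBall B → (∃ a ∈ B, ∃ b ∈ B, a ≠ b) →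
      ∀ A : Set X, IsMaxSubball A B → ¬ lt B A A)
    (h_trans : ∀ B : Set X, IsBall B → (∃ a ∈ B, ∃ b ∈ B, a ≠ b) →
      ∀ A A' A'' : Set X, IsMaxSubball A B → IsMaxSubball A' B →
        IsMaxSubball A'' B → lt B A A' → lt B A' A'' → lt B A A'')
    (h_total : ∀ B : Set X, IsBall B → (∃ a ∈ B, ∃ b ∈ B, a ≠ b) →
      ∀ A A' : Set X, IsMaxSubball A B → IsMaxSubball A' B → A ≠ A' →
        lt B A A' ∨ lt B A' A)
    (C : Set (Set X)) (hball : ∀ A ∈ C, IsBall A)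
    (hdisj : C.Pairwise (fun A A' => Disjoint A A')) :
    (∀ B₁ ∈ C, ∀ B₂ ∈ C, ∀ B₃ ∈ C,
      BallLT lt B₁ B₂ → BallLT lt B₂ B₃ → BallLT lt B₁ B₃) ∧
    (∀ B₁ ∈ C, ∀ B₂ ∈ C, B₁ ≠ B₂ →
      Xor' (BallLT lt B₁ B₂) (BallLT lt B₂ B₁)) := by
  haveI : IsUltrametricDist X := ⟨fun x y z => hX x z y⟩
  open Metric in
  have core : ∀ B₁ ∈ C, ∀ B₂ ∈ C, B₁ ≠ B₂ →
      (BallLT lt B₁ B₂ ∨ BallLT lt B₂ B₁) ∧ ¬(BallLT lt B₁ B₂ ∧ BallLT lt B₂ B₁) := by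
    intro B₁ h₁ B₂ h₂ hne
    obtain ⟨x, hx⟩ := BallOrderAux.nonempty_of_isBall (hball _ h₁)
    obtain ⟨y, hy⟩ := BallOrderAux.nonempty_of_isBall (hball _ h₂)
    have hd12 := hdisj h₁ h₂ hne
    have hxy : x ≠ y := hd12.ne_of_mem hx hy
    have hd0 : 0 < dist x y := dist_pos.mpr hxy
    have hxc : x ∈ Metric.closedBall x (dist x y) := Metric.mem_closedBall_self hd0.le
    have hyc : y ∈ Metric.closedBall x (dist x y) :=
      Metric.mem_closedBall.mpr (dist_comm y x).le
    have hBall : IsBall (Metric.closedBall x (dist x y)) := BallOrderAux.isBall_closedBall x hd0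
    have twoPts : ∃ a ∈ Metric.closedBall x (dist x y), ∃ b ∈ Metric.closedBall x (dist x y),
        a ≠ b := ⟨x, hxc, y, hyc, hxy⟩
    have hmsx : IsMaxSubball (Metric.ball x (dist x y)) (Metric.closedBall x (dist x y)) :=
      BallOrderAux.isMaxSubball_ball hd0 hxc ⟨y, hyc, le_rfl⟩
    have hmsy : IsMaxSubball (Metric.ball y (dist x y)) (Metric.closedBall x (dist x y)) :=
      BallOrderAux.isMaxSubball_ball hd0 hyc ⟨x, hxc, (dist_comm x y).le⟩
    have iff12 := BallOrderAux.ballLT_iff lt (hball _ h₁) (hball _ h₂) hd12 hx hy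
    have iff21 := BallOrderAux.ballLT_iff lt (hball _ h₂) (hball _ h₁) hd12.symm hy hx
    rw [dist_comm y x,
      show Metric.closedBall y (dist x y) = Metric.closedBall x (dist x y) from
        (IsUltrametricDist.closedBall_eq_of_mem hyc).symm] at iff21
    have hA_ne : Metric.ball x (dist x y) ≠ Metric.ball y (dist x y) := by
      intro h
      have hyb : y ∈ Metric.ball x (dist x y) := by rw [h]; exact Metric.mem_ball_self hd0
      rw [Metric.mem_ball, dist_comm y x] at hyb
      exact lt_irrefl _ hyb
    constructor
    · rcases h_total _ hBall twoPts _ _ hmsx hmsy hA_ne with h | h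
      · exact Or.inl (iff12.mpr h)
      · exact Or.inr (iff21.mpr h)
    · rintro ⟨p, q⟩
      exact h_irrefl _ hBall twoPts _ hmsx
        (h_trans _ hBall twoPts _ _ _ hmsx hmsy hmsx (iff12.mp p) (iff21.mp q))
  refine ⟨?_, ?_⟩
  · intro B₁ h₁ B₂ h₂ B₃ h₃ h12 h23
    have ne12 : B₁ ≠ B₂ := by
      rintro rfl; exact BallOrderAux.not_ballLT_self lt (hball _ h₁) h12
    have ne23 : B₂ ≠ B₃ := by
      rintro rfl; exact BallOrderAux.not_ballLT_self lt (hball _ h₂) h23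
    by_cases h13 : B₁ = B₃
    · exact absurd (⟨h12, by rw [h13]; exact h23⟩ : _ ∧ _) (core B₁ h₁ B₂ h₂ ne12).2
    · obtain ⟨x, hx⟩ := BallOrderAux.nonempty_of_isBall (hball _ h₁)
      obtain ⟨y, hy⟩ := BallOrderAux.nonempty_of_isBall (hball _ h₂)
      obtain ⟨z, hz⟩ := BallOrderAux.nonempty_of_isBall (hball _ h₃)
      have hd12 := hdisj h₁ h₂ ne12
      have hd23 := hdisj h₂ h₃ ne23
      have hd13 := hdisj h₁ h₃ h13
      have iff12 := BallOrderAux.ballLT_iff lt (hball _ h₁) (hball _ h₂) hd12 hx hy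
      have iff23 := BallOrderAux.ballLT_iff lt (hball _ h₂) (hball _ h₃) hd23 hy hz
      have iff13 := BallOrderAux.ballLT_iff lt (hball _ h₁) (hball _ h₃) hd13 hx hz
      have l12 := iff12.mp h12
      have l23 := iff23.mp h23
      rcases lt_trichotomy (dist x y) (dist y z) with h | h | h
      · -- dist x y < dist y z, so dist x z = dist y z
        have hxz : dist x z = dist y z := by
          apply le_antisymm
          · exact (IsUltrametricDist.dist_triangle_max x y z).trans (max_le h.le le_rfl)
          · rcases le_max_iff.mp (IsUltrametricDist.dist_triangle_max y x z) with h' | h'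
            · rw [dist_comm y x] at h'; linarith
            · exact h'
        apply iff13.mpr
        rw [hxz,
          show Metric.closedBall x (dist y z) = Metric.closedBall y (dist y z) from
            IsUltrametricDist.closedBall_eq_of_mem
              (by rw [Metric.mem_closedBall, dist_comm y x]; exact h.le),
          show Metric.ball x (dist y z) = Metric.ball y (dist y z) from
            IsUltrametricDist.ball_eq_of_mem
              (by rw [Metric.mem_ball, dist_comm y x]; exact h)]
        exact l23
      · -- dist x y = dist y z
        have hxy : x ≠ y := hd12.ne_of_mem hx hy
        have hd0 : 0 < dist x y := dist_pos.mpr hxy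
        have hxc : x ∈ Metric.closedBall x (dist x y) := Metric.mem_closedBall_self hd0.le
        have hyc : y ∈ Metric.closedBall x (dist x y) :=
          Metric.mem_closedBall.mpr (dist_comm y x).le
        have hBall : IsBall (Metric.closedBall x (dist x y)) :=
          BallOrderAux.isBall_closedBall x hd0
        have twoPts : ∃ a ∈ Metric.closedBall x (dist x y),
            ∃ b ∈ Metric.closedBall x (dist x y), a ≠ b := ⟨x, hxc, y, hyc, hxy⟩
        have hmsx : IsMaxSubball (Metric.ball x (dist x y)) (Metric.closedBall x (dist x y)) :=
          BallOrderAux.isMaxSubball_ball hd0 hxc ⟨y, hyc, le_rfl⟩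
        have hmsy : IsMaxSubball (Metric.ball y (dist x y)) (Metric.closedBall x (dist x y)) :=
          BallOrderAux.isMaxSubball_ball hd0 hyc ⟨x, hxc, (dist_comm x y).le⟩
        have hze : dist x z ≤ dist x y :=
          (IsUltrametricDist.dist_triangle_max x y z).trans (max_le le_rfl h.ge)
        rw [← h,
          show Metric.closedBall y (dist x y) = Metric.closedBall x (dist x y) from
            (IsUltrametricDist.closedBall_eq_of_mem hyc).symm] at l23
        rcases hze.lt_or_eq with hlt | heq
        · -- dist x z < dist x y : contradiction
          rw [show Metric.ball z (dist x y) = Metric.ball x (dist x y) from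
              (IsUltrametricDist.ball_eq_of_mem
                (by rw [Metric.mem_ball, dist_comm z x]; exact hlt)).symm] at l23
          exact absurd (h_trans _ hBall twoPts _ _ _ hmsx hmsy hmsx l12 l23)
            (h_irrefl _ hBall twoPts _ hmsx)
        · -- dist x z = dist x y
          have hzc : z ∈ Metric.closedBall x (dist x y) :=
            Metric.mem_closedBall.mpr (by rw [dist_comm z x]; exact heq.le)
          have hmsz : IsMaxSubball (Metric.ball z (dist x y))
              (Metric.closedBall x (dist x y)) :=
            BallOrderAux.isMaxSubball_ball hd0 hzc
              ⟨x, hxc, by rw [dist_comm z x, heq]⟩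
          apply iff13.mpr
          rw [heq]
          exact h_trans _ hBall twoPts _ _ _ hmsx hmsy hmsz l12 l23
      · -- dist y z < dist x y, so dist x z = dist x y
        have hxz : dist x z = dist x y := by
          apply le_antisymm
          · exact (IsUltrametricDist.dist_triangle_max x y z).trans (max_le le_rfl h.le)
          · rcases le_max_iff.mp (IsUltrametricDist.dist_triangle_max x z y) with h' | h'
            · exact h'
            · rw [dist_comm z y] at h'; linarith
        apply iff13.mpr
        rw [hxz,
          show Metric.ball z (dist x y) = Metric.ball y (dist x y) from
            (IsUltrametricDist.ball_eq_of_mem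
              (by rw [Metric.mem_ball, dist_comm z y]; exact h)).symm]
        exact l12
  · intro B₁ h₁ B₂ h₂ hne
    obtain ⟨hor, hnand⟩ := core B₁ h₁ B₂ h₂ hne
    rcases hor with h | h
    · exact Or.inl ⟨h, fun h' => hnand ⟨h, h'⟩⟩
    · exact Or.inr ⟨h, fun h' => hnand ⟨h', h⟩⟩
end

section
/- Let X be a nonempty compact ultrametric space and let Sim be a finite similarity structure on X. Then the set Γ(Sim) of all homeomorphisms of X that are locally determined by Sim is a subgroup of the homeomorphism group of X: it contains the identity map, and it is closed under composition and under taking inverses. -/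
/-- The image in `X` of a subset `A ⊆ X` under a map `h : B₁ → B₂` between
subsets of `X` (only the part of `A` inside `B₁` contributes). -/
def imageOn {X : Type*} {B₁ B₂ : Set X} (h : B₁ → B₂) (A : Set X) : Set X :=
  {y : X | ∃ x : B₁, (x : X) ∈ A ∧ (h x : X) = y}

/-- The restriction of `h : B₁ → B₂` to a subset `B₃ ⊆ B₁`, viewed as a map
from `B₃` onto its image. -/
def restrictMap {X : Type*} {B₁ B₂ : Set X} (h : B₁ → B₂) {B₃ : Set X}
    (hsub : B₃ ⊆ B₁) : B₃ → (imageOn h B₃ : Set X) :=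
  fun x => ⟨(h ⟨x.1, hsub x.2⟩ : X), ⟨⟨x.1, hsub x.2⟩, x.2, rfl⟩⟩

/-- A finite similarity structure on a metric space `X` (Hughes): an assignment
to each ordered pair of balls `B₁, B₂` of a finite set `sim B₁ B₂` of
surjective similarities `B₁ → B₂`, containing the identities and closed under
inverses, compositions and restrictions. -/
structure FinSimStructure (X : Type*) [MetricSpace X] where
  sim : ∀ B₁ B₂ : Set X, Set (B₁ → B₂)
  finite : ∀ B₁ B₂ : Set X, IsBall B₁ → IsBall B₂ → (sim B₁ B₂).Finite
  isSim : ∀ B₁ B₂ : Set X, IsBall B₁ → IsBall B₂ → ∀ h ∈ sim B₁ B₂,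
    Function.Surjective h ∧ ∃ C : ℝ, 0 < C ∧
      ∀ a b : B₁, dist (h a : X) (h b : X) = C * dist (a : X) (b : X)
  id_mem : ∀ B : Set X, IsBall B → (id : B → B) ∈ sim B B
  inv_mem : ∀ B₁ B₂ : Set X, IsBall B₁ → IsBall B₂ → ∀ h ∈ sim B₁ B₂,
    ∀ g : B₂ → B₁, (∀ x, g (h x) = x) → (∀ y, h (g y) = y) → g ∈ sim B₂ B₁
  comp_mem : ∀ B₁ B₂ B₃ : Set X, IsBall B₁ → IsBall B₂ → IsBall B₃ →
    ∀ h₁ ∈ sim B₁ B₂, ∀ h₂ ∈ sim B₂ B₃, (h₂ ∘ h₁) ∈ sim B₁ B₃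
  restrict_mem : ∀ B₁ B₂ : Set X, IsBall B₁ → IsBall B₂ → ∀ h ∈ sim B₁ B₂,
    ∀ B₃ : Set X, IsBall B₃ → ∀ hsub : B₃ ⊆ B₁,
      IsBall (imageOn h B₃) ∧ restrictMap h hsub ∈ sim B₃ (imageOn h B₃)

/-- A homeomorphism `f : X → X` is locally determined by the finite similarity
structure `S` if every point lies in a ball `B` such that `f(B)` is a ball and
the restriction of `f` to `B` belongs to `S.sim B (f(B))`. -/
def LocallyDetermined {X : Type*} [MetricSpace X] (S : FinSimStructure X)
    (f : X ≃ₜ X) : Prop :=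
  ∀ x : X, ∃ B : Set X, IsBall B ∧ x ∈ B ∧ IsBall ((f : X → X) '' B) ∧
    (fun a : B => (⟨f a.1, Set.mem_image_of_mem _ a.2⟩ :
        ((f : X → X) '' B : Set X))) ∈ S.sim B ((f : X → X) '' B)

section Helpers

variable {X : Type*} [MetricSpace X]

lemma sim_congr (S : FinSimStructure X) {B₁ B₂ B₂' : Set X}
    (hE : B₂ = B₂') {h : B₁ → B₂} {h' : B₁ → B₂'}
    (hfun : ∀ a, ((h a : X) = (h' a : X)))
    (hm : h ∈ S.sim B₁ B₂) : h' ∈ S.sim B₁ B₂' := by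
  subst hE
  have : h = h' := funext fun a => Subtype.ext (hfun a)
  exact this ▸ hm

lemma restrict_loc (S : FinSimStructure X) (f : X ≃ₜ X) {B₁ B : Set X}
    (hB₁ : IsBall B₁) (hB : IsBall B) (hsub : B ⊆ B₁)
    (himg : IsBall ((f : X → X) '' B₁))
    (hmem : (fun a : B₁ => (⟨f a.1, Set.mem_image_of_mem _ a.2⟩ :
        ((f : X → X) '' B₁ : Set X))) ∈ S.sim B₁ ((f : X → X) '' B₁)) :
    IsBall ((f : X → X) '' B) ∧
      (fun a : B => (⟨f a.1, Set.mem_image_of_mem _ a.2⟩ :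
        ((f : X → X) '' B : Set X))) ∈ S.sim B ((f : X → X) '' B) := by
  obtain ⟨hball, hmem'⟩ := S.restrict_mem B₁ _ hB₁ himg _ hmem B hB hsub
  have hEq : imageOn (fun a : B₁ => (⟨f a.1, Set.mem_image_of_mem _ a.2⟩ :
        ((f : X → X) '' B₁ : Set X))) B = (f : X → X) '' B := by
    ext y
    constructor
    · rintro ⟨x, hx, rfl⟩; exact ⟨x.1, hx, rfl⟩
    · rintro ⟨x, hx, rfl⟩; exact ⟨⟨x, hsub hx⟩, hx, rfl⟩
  exact ⟨hEq ▸ hball, sim_congr S hEq (fun a => rfl) hmem'⟩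

lemma ball_subset_ball_ultra (hX : ∀ x y z : X, dist x y ≤ max (dist x z) (dist z y))
    {c c' z : X} {r r' : ℝ} (hz : z ∈ Metric.ball c r) (hz' : z ∈ Metric.ball c' r')
    (hrr : r ≤ r') : Metric.ball c r ⊆ Metric.ball c' r' := by
  intro y hy
  simp only [Metric.mem_ball] at *
  have h1 : dist c c' < r' := by
    calc dist c c' ≤ max (dist c z) (dist z c') := hX c c' z
      _ < r' := max_lt (lt_of_lt_of_le (by rwa [dist_comm]) hrr) hz'
  calc dist y c' ≤ max (dist y c) (dist c c') := hX y c' c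
    _ < r' := max_lt (lt_of_lt_of_le hy hrr) h1

lemma ball_comparable (hX : ∀ x y z : X, dist x y ≤ max (dist x z) (dist z y))
    {A B : Set X} (hA : IsBall A) (hB : IsBall B) {z : X}
    (hzA : z ∈ A) (hzB : z ∈ B) : A ⊆ B ∨ B ⊆ A := by
  obtain ⟨c, r, -, rfl⟩ := hA
  obtain ⟨c', r', -, rfl⟩ := hB
  rcases le_total r r' with h | h
  · exact Or.inl (ball_subset_ball_ultra hX hzA hzB h)
  · exact Or.inr (ball_subset_ball_ultra hX hzB hzA h)

end Helpers

/-- The set of homeomorphisms of a nonempty compact ultrametric space that are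
locally determined by a finite similarity structure forms a subgroup of the
homeomorphism group: it contains the identity and is closed under composition
and inverses. -/
theorem locallyDetermined_is_subgroup
    {X : Type*} [MetricSpace X] [CompactSpace X] [Nonempty X]
    (hX : ∀ x y z : X, dist x y ≤ max (dist x z) (dist z y))
    (S : FinSimStructure X) :
    LocallyDetermined S (Homeomorph.refl X) ∧
    (∀ f g : X ≃ₜ X, LocallyDetermined S f → LocallyDetermined S g →
      LocallyDetermined S (f.trans g)) ∧
    (∀ f : X ≃ₜ X, LocallyDetermined S f → LocallyDetermined S f.symm) := by
  refine ⟨?_, ?_, ?_⟩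
  · -- identity
    intro x
    refine ⟨Metric.ball x 1, ⟨x, 1, one_pos, rfl⟩, Metric.mem_ball_self one_pos, ?_, ?_⟩
    · have : (⇑(Homeomorph.refl X)) '' Metric.ball x 1 = Metric.ball x 1 := by simp
      rw [this]; exact ⟨x, 1, one_pos, rfl⟩
    · refine sim_congr S (show Metric.ball x 1 =
          (⇑(Homeomorph.refl X)) '' Metric.ball x 1 by simp) (fun a => rfl) ?_
      exact S.id_mem (Metric.ball x 1) ⟨x, 1, one_pos, rfl⟩
  · -- composition
    intro f g hf hg x
    obtain ⟨B₁, hB₁, hx₁, himg1, hmem1⟩ := hf x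
    obtain ⟨B₂, hB₂, hfx₂, himg2, hmem2⟩ := hg (f x)
    have hfx1 : f x ∈ (f : X → X) '' B₁ := Set.mem_image_of_mem _ hx₁
    have key : ∃ B : Set X, IsBall B ∧ x ∈ B ∧ B ⊆ B₁ ∧ (f : X → X) '' B ⊆ B₂ := by
      rcases ball_comparable hX himg1 hB₂ hfx1 hfx₂ with hsub | hsub
      · exact ⟨B₁, hB₁, hx₁, subset_rfl, hsub⟩
      · -- B₂ ⊆ f '' B₁ : pull back B₂ by the inverse similarity
        set g' : ((f : X → X) '' B₁ : Set X) → B₁ := fun b =>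
          ⟨f.symm b.1, by
            obtain ⟨a, ha, hab⟩ := b.2
            rw [← hab, Homeomorph.symm_apply_apply]; exact ha⟩ with hg'
        have hg'mem : g' ∈ S.sim ((f : X → X) '' B₁) B₁ :=
          S.inv_mem B₁ _ hB₁ himg1 _ hmem1 g'
            (fun a => Subtype.ext (f.symm_apply_apply a.1))
            (fun b => Subtype.ext (f.apply_symm_apply b.1))
        obtain ⟨hBball, -⟩ := S.restrict_mem _ B₁ himg1 hB₁ g' hg'mem B₂ hB₂ hsub
        refine ⟨imageOn g' B₂, hBball, ?_, ?_, ?_⟩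
        · exact ⟨⟨f x, hfx1⟩, hfx₂, f.symm_apply_apply x⟩
        · rintro z ⟨xx, -, hzz⟩
          rw [← hzz]; exact (g' xx).2
        · rintro z ⟨w, ⟨xx, hxx, hw⟩, rfl⟩
          have : (f : X → X) w = xx.1 := by
            rw [← hw]; exact f.apply_symm_apply xx.1
          rw [this]; exact hxx
    obtain ⟨B, hB, hxB, hBsub, hfB⟩ := key
    obtain ⟨himgB, hmemB⟩ := restrict_loc S f hB₁ hB hBsub himg1 hmem1
    obtain ⟨himgGB, hmemGB⟩ := restrict_loc S g hB₂ himgB hfB himg2 hmem2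
    have hcomp := S.comp_mem B _ _ hB himgB himgGB _ hmemB _ hmemGB
    have hEq : (g : X → X) '' ((f : X → X) '' B) = (⇑(f.trans g)) '' B := by
      rw [← Set.image_comp]
      rfl
    refine ⟨B, hB, hxB, hEq ▸ himgGB, ?_⟩
    exact sim_congr S hEq (fun a => rfl) hcomp
  · -- inverse
    intro f hf y
    obtain ⟨B, hB, hx, himg, hmem⟩ := hf (f.symm y)
    have hy : y ∈ (f : X → X) '' B := ⟨f.symm y, hx, f.apply_symm_apply y⟩
    have hEq : (⇑f.symm) '' ((f : X → X) '' B) = B := by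
      rw [← Set.image_comp]
      simp
    set g' : ((f : X → X) '' B : Set X) → B := fun b =>
      ⟨f.symm b.1, by
        obtain ⟨a, ha, hab⟩ := b.2
        rw [← hab, Homeomorph.symm_apply_apply]; exact ha⟩ with hg'
    have hg'mem : g' ∈ S.sim ((f : X → X) '' B) B :=
      S.inv_mem B _ hB himg _ hmem g'
        (fun a => Subtype.ext (f.symm_apply_apply a.1))
        (fun b => Subtype.ext (f.apply_symm_apply b.1))
    refine ⟨(f : X → X) '' B, himg, hy, by rw [hEq]; exact hB, ?_⟩
    exact sim_congr S hEq.symm (fun a => rfl) hg'mem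
end

section
/- Let X be a nonempty compact ultrametric space with a finite similarity structure Sim, and let γ be a homeomorphism of X locally determined by Sim. Then there exists a finite partition {B_1, …, B_n} of X into balls such that for each i, γ(B_i) is a ball, {γ(B_1), …, γ(B_n)} is a partition of X, and the restriction γ|B_i belongs to Sim(B_i, γ(B_i)). Moreover, the partition can be chosen maximal in the sense that whenever B is a ball of X such that γ(B) is a ball and γ|B ∈ Sim(B, γ(B)), then B ⊆ B_i for some i ∈ {1, …, n}. -/
/-!
In an ultrametric space two balls are either nested or disjoint. By compactness finitely many
balls `T` on which `γ` is given by `Sim` cover `X`. Any other such ball either lies in a member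
of `T` or is the union of the members of `T` it contains. Hence the such balls that are unions of
members of `T` form a finite family containing every such ball up to inclusion, and its maximal
members form the partition. Its images partition `X` because `γ` is a bijection.
-/

open Set

def IsLaminar {α : Type*} (𝒢 : Set (Set α)) : Prop :=
  ∀ A ∈ 𝒢, ∀ B ∈ 𝒢, (A ∩ B).Nonempty → A ⊆ B ∨ B ⊆ A

namespace IsLaminar

variable {α : Type*} {𝒢 ℱ T : Set (Set α)}

theorem mono (h : IsLaminar 𝒢) (hℱ : ℱ ⊆ 𝒢) : IsLaminar ℱ :=
  fun A hA B hB => h A (hℱ hA) B (hℱ hB)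

theorem pairwise_disjoint_maximal (h : IsLaminar ℱ) :
    {B | Maximal (· ∈ ℱ) B}.Pairwise Disjoint := by
  intro A hA B hB hne
  by_contra hAB
  rcases h A hA.prop B hB.prop (not_disjoint_iff_nonempty_inter.mp hAB) with hsub | hsub
  · exact hne (hA.eq_of_subset hB.prop hsub)
  · exact hne (hB.eq_of_subset hA.prop hsub).symm

theorem eq_sUnion_of_forall_not_subset (h : IsLaminar 𝒢) (hT𝒢 : T ⊆ 𝒢) (hcover : ⋃₀ T = univ)
    {B : Set α} (hB : B ∈ 𝒢) (hnot : ∀ A ∈ T, ¬B ⊆ A) : B = ⋃₀ {A ∈ T | A ⊆ B} := by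
  refine (sUnion_subset fun A hA => hA.2).antisymm' fun x hx => ?_
  obtain ⟨A, hAT, hxA⟩ : x ∈ ⋃₀ T := hcover ▸ mem_univ x
  exact ⟨A, ⟨hAT, (h A (hT𝒢 hAT) B hB ⟨x, hxA, hx⟩).resolve_right (hnot A hAT)⟩, hxA⟩

theorem exists_finite_partition_forall_subset (h : IsLaminar 𝒢) (hT : T.Finite) (hT𝒢 : T ⊆ 𝒢)
    (hcover : ⋃₀ T = univ) :
    ∃ P ⊆ 𝒢, P.Finite ∧ P.Pairwise Disjoint ∧ ⋃₀ P = univ ∧ ∀ B ∈ 𝒢, ∃ B' ∈ P, B ⊆ B' := by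
  set ℱ := 𝒢 ∩ sUnion '' 𝒫 T
  have hℱ : ℱ.Finite := (hT.finite_subsets.image _).inter_of_right 𝒢
  have hTℱ : T ⊆ ℱ := fun A hA => ⟨hT𝒢 hA, {A}, singleton_subset_iff.2 hA, sUnion_singleton A⟩
  have hℱdom : ∀ B ∈ 𝒢, ∃ B' ∈ ℱ, B ⊆ B' := by
    intro B hB
    by_cases hsub : ∃ A ∈ T, B ⊆ A
    · obtain ⟨A, hA, hBA⟩ := hsub
      exact ⟨A, hTℱ hA, hBA⟩
    · push Not at hsub
      exact ⟨B, ⟨hB, _, fun A hA => hA.1,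
        (h.eq_sUnion_of_forall_not_subset hT𝒢 hcover hB hsub).symm⟩, subset_rfl⟩
  have hmax : ∀ B ∈ ℱ, ∃ B', B ⊆ B' ∧ Maximal (· ∈ ℱ) B' := fun B hB => hℱ.exists_le_maximal hB
  refine ⟨{B | Maximal (· ∈ ℱ) B}, fun B hB => hB.prop.1, hℱ.subset fun B hB => hB.prop,
    (h.mono inter_subset_left).pairwise_disjoint_maximal, ?_, fun B hB => ?_⟩
  · refine eq_univ_of_forall fun x => ?_
    obtain ⟨A, hAT, hxA⟩ : x ∈ ⋃₀ T := hcover ▸ mem_univ x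
    obtain ⟨B', hAB', hB'⟩ := hmax A (hTℱ hAT)
    exact ⟨B', hB', hAB' hxA⟩
  · obtain ⟨B₁, hB₁, hBB₁⟩ := hℱdom B hB
    obtain ⟨B', hB₁B', hB'⟩ := hmax B₁ hB₁
    exact ⟨B', hB', hBB₁.trans hB₁B'⟩

end IsLaminar

theorem isLaminar_isBall {X : Type*} [MetricSpace X] [IsUltrametricDist X] :
    IsLaminar {B : Set X | IsBall B} := by
  rintro _ ⟨x, r, -, rfl⟩ _ ⟨y, s, -, rfl⟩ hxy
  rcases IsUltrametricDist.ball_subset_trichotomy x y r s with h | h | h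
  · exact .inl h
  · exact .inr h
  · exact absurd h (not_disjoint_iff_nonempty_inter.mpr hxy)

section SimBall

variable {X : Type*} [MetricSpace X] (S : FinSimStructure X) (f : X ≃ₜ X)

def IsSimBall (B : Set X) : Prop :=
  IsBall B ∧ IsBall ((f : X → X) '' B) ∧
    (fun a : B => (⟨f a.1, mem_image_of_mem _ a.2⟩ : ((f : X → X) '' B : Set X))) ∈
      S.sim B ((f : X → X) '' B)

variable {S f}

theorem LocallyDetermined.exists_finite_cover [CompactSpace X] (hf : LocallyDetermined S f) :
    ∃ T : Set (Set X), T.Finite ∧ T ⊆ {B | IsSimBall S f B} ∧ ⋃₀ T = univ := by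
  choose U hUball hmem hUsim using hf
  have hnhds : ∀ x, U x ∈ nhds x := by
    intro x
    obtain ⟨c, r, -, hU⟩ := hUball x
    exact (hU ▸ Metric.isOpen_ball).mem_nhds (hmem x)
  obtain ⟨t, ht⟩ := CompactSpace.elim_nhds_subcover U hnhds
  refine ⟨U '' t, t.finite_toSet.image U, ?_, by rwa [sUnion_image]⟩
  rintro _ ⟨x, -, rfl⟩
  exact ⟨hUball x, hUsim x⟩

end SimBall

theorem locallyDetermined_defining_partition_general
    {X : Type*} [MetricSpace X] [CompactSpace X]
    (hX : ∀ x y z : X, dist x y ≤ max (dist x z) (dist z y))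
    (S : FinSimStructure X) (γ : X ≃ₜ X) (hγ : LocallyDetermined S γ) :
    ∃ P : Set (Set X), P.Finite ∧ (∀ B ∈ P, IsBall B) ∧
      P.Pairwise (fun A A' => Disjoint A A') ∧ ⋃₀ P = Set.univ ∧
      (∀ B ∈ P, IsBall ((γ : X → X) '' B) ∧
        (fun a : B => (⟨γ a.1, Set.mem_image_of_mem _ a.2⟩ :
            ((γ : X → X) '' B : Set X))) ∈ S.sim B ((γ : X → X) '' B)) ∧
      ((Set.image (γ : X → X)) '' P).Pairwise (fun A A' => Disjoint A A') ∧
      ⋃₀ ((Set.image (γ : X → X)) '' P) = Set.univ ∧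
      (∀ B : Set X, IsBall B → IsBall ((γ : X → X) '' B) →
        (fun a : B => (⟨γ a.1, Set.mem_image_of_mem _ a.2⟩ :
            ((γ : X → X) '' B : Set X))) ∈ S.sim B ((γ : X → X) '' B) →
        ∃ B' ∈ P, B ⊆ B') := by
  have : IsUltrametricDist X := ⟨fun x y z => hX x z y⟩
  obtain ⟨T, hT, hTsim, hcover⟩ := hγ.exists_finite_cover
  obtain ⟨P, hPsim, hP, hdisj, hPcover, hPmax⟩ :=
    (isLaminar_isBall.mono fun B hB => hB.1).exists_finite_partition_forall_subset hT hTsim hcover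
  refine ⟨P, hP, fun B hB => (hPsim hB).1, hdisj, hPcover, fun B hB => (hPsim hB).2, ?_, ?_,
    fun B h₁ h₂ h₃ => hPmax B ⟨h₁, h₂, h₃⟩⟩
  · rintro _ ⟨B, hB, rfl⟩ _ ⟨B', hB', rfl⟩ hne
    exact (disjoint_image_iff γ.injective).2 (hdisj hB hB' fun h => hne (h ▸ rfl))
  · rw [← image_sUnion, hPcover, image_univ_of_surjective γ.surjective]

/-- Every homeomorphism `γ` of a nonempty compact ultrametric space that is
locally determined by a finite similarity structure `S` admits a defining
partition: a finite partition `P` of `X` into balls such that for each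
`B ∈ P`, `γ(B)` is a ball, the images form a partition of `X`, and
`γ|B ∈ S.sim B (γ(B))`; moreover `P` can be chosen maximal, in the sense that
any ball `B` with `γ(B)` a ball and `γ|B ∈ S.sim B (γ(B))` is contained in a
member of `P`. -/
theorem locallyDetermined_defining_partition
    {X : Type*} [MetricSpace X] [CompactSpace X] [Nonempty X]
    (hX : ∀ x y z : X, dist x y ≤ max (dist x z) (dist z y))
    (S : FinSimStructure X) (γ : X ≃ₜ X) (hγ : LocallyDetermined S γ) :
    ∃ P : Set (Set X), P.Finite ∧ (∀ B ∈ P, IsBall B) ∧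
      P.Pairwise (fun A A' => Disjoint A A') ∧ ⋃₀ P = Set.univ ∧
      (∀ B ∈ P, IsBall ((γ : X → X) '' B) ∧
        (fun a : B => (⟨γ a.1, Set.mem_image_of_mem _ a.2⟩ :
            ((γ : X → X) '' B : Set X))) ∈ S.sim B ((γ : X → X) '' B)) ∧
      ((Set.image (γ : X → X)) '' P).Pairwise (fun A A' => Disjoint A A') ∧
      ⋃₀ ((Set.image (γ : X → X)) '' P) = Set.univ ∧
      (∀ B : Set X, IsBall B → IsBall ((γ : X → X) '' B) →
        (fun a : B => (⟨γ a.1, Set.mem_image_of_mem _ a.2⟩ :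
            ((γ : X → X) '' B : Set X))) ∈ S.sim B ((γ : X → X) '' B) →
        ∃ B' ∈ P, B ⊆ B') :=
  locallyDetermined_defining_partition_general hX S γ hγ
end

section
/- Let X be a nonempty compact ultrametric space endowed with a small finite similarity structure Sim (i.e., |Sim(B_1, B_2)| ≤ 1 for every pair of balls B_1, B_2 of X). Then there exists a ball order on X that is compatible with Sim: an assignment to each ball B of X containing at least two points of a linear order <_B on the set of maximal proper subballs of B, such that for all balls B_1, B_2, every h ∈ Sim(B_1, B_2), and all maximal proper subballs A, A' of B_1, if A <_{B_1} A' then h(A) <_{B_2} h(A'). -/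
set_option linter.unusedSectionVars false

section Aux

variable {X : Type*} [MetricSpace X]

theorem imageOn_subset {B₁ B₂ : Set X} (h : B₁ → B₂) (A : Set X) :
    imageOn h A ⊆ B₂ := by
  rintro y ⟨x, -, rfl⟩; exact (h x).2

theorem imageOn_comp {B₁ B₂ B₃ : Set X} (h₁ : B₁ → B₂) (h₂ : B₂ → B₃) (A : Set X) :
    imageOn h₂ (imageOn h₁ A) = imageOn (h₂ ∘ h₁) A := by
  ext y
  constructor
  · rintro ⟨x, ⟨z, hz, hzx⟩, rfl⟩
    obtain rfl : h₁ z = x := Subtype.ext hzx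
    exact ⟨z, hz, rfl⟩
  · rintro ⟨z, hz, rfl⟩
    exact ⟨h₁ z, ⟨z, hz, rfl⟩, rfl⟩

theorem imageOn_id {B A : Set X} (hA : A ⊆ B) : imageOn (id : B → B) A = A := by
  ext y
  constructor
  · rintro ⟨x, hx, rfl⟩; exact hx
  · intro hy; exact ⟨⟨y, hA hy⟩, hy, rfl⟩

theorem imageOn_full {B₁ B₂ : Set X} {h : B₁ → B₂} (hs : Function.Surjective h) :
    imageOn h B₁ = B₂ := by
  ext y
  constructor
  · rintro ⟨x, -, rfl⟩; exact (h x).2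
  · intro hy
    obtain ⟨x, hx⟩ := hs ⟨y, hy⟩
    exact ⟨x, x.2, by rw [hx]⟩

theorem imageOn_ssubset {B₁ B₂ : Set X} {h : B₁ → B₂} (hi : Function.Injective h)
    {s t : Set X} (hst : s ⊂ t) (ht : t ⊆ B₁) : imageOn h s ⊂ imageOn h t := by
  constructor
  · rintro y ⟨x, hx, rfl⟩; exact ⟨x, hst.subset hx, rfl⟩
  · intro hsub
    obtain ⟨u, hut, hus⟩ := Set.exists_of_ssubset hst
    obtain ⟨z, hz, hze⟩ := hsub ⟨⟨u, ht hut⟩, hut, rfl⟩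
    have hzu : z = ⟨u, ht hut⟩ := hi (Subtype.ext hze)
    rw [hzu] at hz
    exact hus hz

theorem imageOn_inj_eq {B₁ B₂ : Set X} {h : B₁ → B₂} (hi : Function.Injective h)
    {A A' : Set X} (hA : A ⊆ B₁) (hA' : A' ⊆ B₁)
    (he : imageOn h A = imageOn h A') : A = A' := by
  have key : ∀ A A' : Set X, A ⊆ B₁ → imageOn h A = imageOn h A' → A ⊆ A' := by
    intro A A' hA he y hy
    have : (↑(h ⟨y, hA hy⟩) : X) ∈ imageOn h A' := he ▸ ⟨⟨y, hA hy⟩, hy, rfl⟩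
    obtain ⟨z, hz, hze⟩ := this
    have hzy : z = ⟨y, hA hy⟩ := hi (Subtype.ext hze)
    rw [hzy] at hz
    exact hz
  exact le_antisymm (key A A' hA he) (key A' A hA' he.symm)

variable (S : FinSimStructure X)

theorem sim_inj {B₁ B₂ : Set X} (h₁ : IsBall B₁) (h₂ : IsBall B₂) {h : B₁ → B₂}
    (hm : h ∈ S.sim B₁ B₂) : Function.Injective h := by
  obtain ⟨-, C, hC, hd⟩ := S.isSim B₁ B₂ h₁ h₂ h hm
  intro a b hab
  have hd' := hd a b
  rw [hab, dist_self] at hd'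
  have : dist (a : X) (b : X) = 0 := by
    rcases mul_eq_zero.mp hd'.symm with h0 | h0
    · exact absurd h0 hC.ne'
    · exact h0
  exact Subtype.ext (dist_eq_zero.mp this)

theorem sim_inv {B₁ B₂ : Set X} (h₁ : IsBall B₁) (h₂ : IsBall B₂) {h : B₁ → B₂}
    (hm : h ∈ S.sim B₁ B₂) :
    ∃ g : B₂ → B₁, g ∈ S.sim B₂ B₁ ∧ (∀ x, g (h x) = x) ∧ (∀ y, h (g y) = y) := by
  have hs := (S.isSim _ _ h₁ h₂ h hm).1
  have hi := sim_inj S h₁ h₂ hm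
  let e := Equiv.ofBijective h ⟨hi, hs⟩
  exact ⟨e.symm,
    S.inv_mem _ _ h₁ h₂ h hm e.symm (e.symm_apply_apply) (e.apply_symm_apply),
    e.symm_apply_apply, e.apply_symm_apply⟩

def simRel (B₁ B₂ : Set X) : Prop :=
  B₁ = B₂ ∨ (IsBall B₁ ∧ IsBall B₂ ∧ (S.sim B₁ B₂).Nonempty)

theorem simRel_equiv : Equivalence (simRel S) where
  refl := fun _ => Or.inl rfl
  symm := by
    rintro B₁ B₂ (rfl | ⟨hb1, hb2, h, hm⟩)
    · exact Or.inl rfl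
    · obtain ⟨g, hg, -, -⟩ := sim_inv S hb1 hb2 hm
      exact Or.inr ⟨hb2, hb1, g, hg⟩
  trans := by
    rintro B₁ B₂ B₃ (rfl | ⟨hb1, hb2, h, hm⟩) h23
    · exact h23
    · rcases h23 with rfl | ⟨hb2', hb3, h', hm'⟩
      · exact Or.inr ⟨hb1, hb2, h, hm⟩
      · exact Or.inr ⟨hb1, hb3, h' ∘ h,
          S.comp_mem _ _ _ hb1 hb2 hb3 h hm h' hm'⟩

def ballSetoid : Setoid (Set X) := ⟨simRel S, simRel_equiv S⟩

noncomputable def repBall (B : Set X) : Set X :=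
  Quotient.out (Quotient.mk (ballSetoid S) B)

theorem repBall_rel (B : Set X) : simRel S (repBall S B) B :=
  Quotient.mk_out (s := ballSetoid S) B

theorem repBall_eq {B₁ B₂ : Set X} (h : simRel S B₁ B₂) :
    repBall S B₁ = repBall S B₂ :=
  congrArg Quotient.out (Quotient.sound h)

theorem repBall_isBall {B : Set X} (hB : IsBall B) : IsBall (repBall S B) := by
  rcases repBall_rel S B with h | ⟨h, -, -⟩
  · rw [h]; exact hB
  · exact h

theorem canon_nonempty {B : Set X} (hB : IsBall B) :
    (S.sim B (repBall S B)).Nonempty := by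
  rcases repBall_rel S B with h | ⟨hb1, hb2, g, hg⟩
  · rw [h]; exact ⟨id, S.id_mem B hB⟩
  · obtain ⟨g', hg', -, -⟩ := sim_inv S hb1 hb2 hg
    exact ⟨g', hg'⟩

noncomputable def canon (B : Set X) (hB : IsBall B) : B → (repBall S B : Set X) :=
  (canon_nonempty S hB).some

theorem canon_mem (B : Set X) (hB : IsBall B) :
    canon S B hB ∈ S.sim B (repBall S B) :=
  (canon_nonempty S hB).some_mem

theorem sim_image_unique
    (hsmall : ∀ B₁ B₂ : Set X, IsBall B₁ → IsBall B₂ → (S.sim B₁ B₂).Subsingleton)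
    {B R₁ R₂ : Set X} (hB : IsBall B) (hR : IsBall R₁) (e : R₁ = R₂)
    {f₁ : B → R₁} {f₂ : B → R₂}
    (m₁ : f₁ ∈ S.sim B R₁) (m₂ : f₂ ∈ S.sim B R₂) (A : Set X) :
    imageOn f₁ A = imageOn f₂ A := by
  subst e
  rw [hsmall B R₁ hB hR m₁ m₂]

theorem canon_coherent
    (hsmall : ∀ B₁ B₂ : Set X, IsBall B₁ → IsBall B₂ → (S.sim B₁ B₂).Subsingleton)
    {B₁ B₂ : Set X} (hb1 : IsBall B₁) (hb2 : IsBall B₂) {h : B₁ → B₂}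
    (hm : h ∈ S.sim B₁ B₂) (A : Set X) :
    imageOn (canon S B₂ hb2) (imageOn h A) = imageOn (canon S B₁ hb1) A := by
  rw [imageOn_comp]
  have e : repBall S B₁ = repBall S B₂ := repBall_eq S (Or.inr ⟨hb1, hb2, h, hm⟩)
  have mem1 : (canon S B₂ hb2) ∘ h ∈ S.sim B₁ (repBall S B₂) :=
    S.comp_mem _ _ _ hb1 hb2 (repBall_isBall S hb2) h hm _ (canon_mem S B₂ hb2)
  exact sim_image_unique S hsmall hb1 (repBall_isBall S hb2) e.symm mem1
    (canon_mem S B₁ hb1) A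

theorem maxSubball_image {B₁ B₂ : Set X} (hb1 : IsBall B₁) (hb2 : IsBall B₂)
    {h : B₁ → B₂} (hm : h ∈ S.sim B₁ B₂) {A : Set X} (hA : IsMaxSubball A B₁) :
    IsMaxSubball (imageOn h A) B₂ := by
  obtain ⟨hAball, hAss, hAmax⟩ := hA
  obtain ⟨hsurj, -⟩ := S.isSim _ _ hb1 hb2 h hm
  have hinj := sim_inj S hb1 hb2 hm
  obtain ⟨g, hg, hgh, hhg⟩ := sim_inv S hb1 hb2 hm
  have hginj : Function.Injective g := by
    intro a b hab
    rw [← hhg a, hab, hhg]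
  have hgsurj : Function.Surjective g := fun x => ⟨h x, hgh x⟩
  refine ⟨(S.restrict_mem _ _ hb1 hb2 h hm A hAball hAss.subset).1, ?_, ?_⟩
  · have := imageOn_ssubset hinj hAss (subset_refl B₁)
    rwa [imageOn_full hsurj] at this
  · rintro B'' hB'' ⟨h1, h2⟩
    have key : imageOn g (imageOn h A) = A := by
      rw [imageOn_comp]
      have : g ∘ h = (id : B₁ → B₁) := funext hgh
      rw [this, imageOn_id hAss.subset]
    have s1 : A ⊂ imageOn g B'' := key ▸ imageOn_ssubset hginj h1 h2.subset
    have s2 : imageOn g B'' ⊂ B₁ := by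
      have := imageOn_ssubset hginj h2 (subset_refl B₂)
      rwa [imageOn_full hgsurj] at this
    exact hAmax (imageOn g B'')
      (S.restrict_mem _ _ hb2 hb1 g hg B'' hB'' h2.subset).1 ⟨s1, s2⟩

end Aux


/-- If `S` is a small finite similarity structure (each `S.sim B₁ B₂` has at
most one element) on a nonempty compact ultrametric space, then there is a
ball order compatible with `S`: an assignment to each ball `B` with at least
two points of a strict linear order `lt B` on its maximal proper subballs,
such that every `h ∈ S.sim B₁ B₂` is order-preserving on maximal proper
subballs. -/
theorem exists_compatible_ball_order
    {X : Type*} [MetricSpace X] [CompactSpace X] [Nonempty X]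
    (hX : ∀ x y z : X, dist x y ≤ max (dist x z) (dist z y))
    (S : FinSimStructure X)
    (hsmall : ∀ B₁ B₂ : Set X, IsBall B₁ → IsBall B₂ →
      (S.sim B₁ B₂).Subsingleton) :
    ∃ lt : Set X → Set X → Set X → Prop,
      (∀ B : Set X, IsBall B → (∃ a ∈ B, ∃ b ∈ B, a ≠ b) →
        (∀ A : Set X, IsMaxSubball A B → ¬ lt B A A) ∧
        (∀ A A' A'' : Set X, IsMaxSubball A B → IsMaxSubball A' B →
          IsMaxSubball A'' B → lt B A A' → lt B A' A'' → lt B A A'') ∧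
        (∀ A A' : Set X, IsMaxSubball A B → IsMaxSubball A' B → A ≠ A' →
          lt B A A' ∨ lt B A' A)) ∧
      (∀ B₁ B₂ : Set X, IsBall B₁ → IsBall B₂ → ∀ h ∈ S.sim B₁ B₂,
        ∀ A A' : Set X, IsMaxSubball A B₁ → IsMaxSubball A' B₁ →
          lt B₁ A A' → lt B₂ (imageOn h A) (imageOn h A')) := by
    classical
  refine ⟨fun B A A' => ∃ hB : IsBall B, IsMaxSubball A B ∧ IsMaxSubball A' B ∧
      WellOrderingRel (imageOn (canon S B hB) A) (imageOn (canon S B hB) A'), ?_, ?_⟩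
  · intro B hB _
    refine ⟨?_, ?_, ?_⟩
    · rintro A hA ⟨hB', -, -, hrel⟩
      exact irrefl_of WellOrderingRel _ hrel
    · rintro A A' A'' hA hA' hA'' ⟨hB1, -, -, h1⟩ ⟨hB2, -, -, h2⟩
      exact ⟨hB, hA, hA'', trans_of WellOrderingRel h1 h2⟩
    · intro A A' hA hA' hne
      have hinj : Function.Injective (canon S B hB) :=
        sim_inj S hB (repBall_isBall S hB) (canon_mem S B hB)
      rcases trichotomous_of WellOrderingRel
          (imageOn (canon S B hB) A) (imageOn (canon S B hB) A') with hlt | heq | hgt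
      · exact Or.inl ⟨hB, hA, hA', hlt⟩
      · exact absurd (imageOn_inj_eq hinj hA.2.1.subset hA'.2.1.subset heq) hne
      · exact Or.inr ⟨hB, hA', hA, hgt⟩
  · rintro B₁ B₂ hb1 hb2 h hm A A' hA hA' ⟨hB1', -, -, hrel⟩
    refine ⟨hb2, maxSubball_image S hb1 hb2 hm hA, maxSubball_image S hb1 hb2 hm hA', ?_⟩
    rw [canon_coherent S hsmall hb1 hb2 hm A, canon_coherent S hsmall hb1 hb2 hm A']
    exact hrel
end

section
/- Let X be a compact ultrametric space and let B be a ball of X containing at least two points. Then every point of B is contained in a unique maximal proper subball of B. -/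
/-- In a compact ultrametric space, every point of a ball `B` with at least
two points lies in a unique maximal proper subball of `B`. -/
theorem mem_unique_maximal_proper_subball
    {X : Type*} [MetricSpace X] [CompactSpace X]
    (hX : ∀ x y z : X, dist x y ≤ max (dist x z) (dist z y))
    (B : Set X) (hB : IsBall B) (h2 : ∃ a ∈ B, ∃ b ∈ B, a ≠ b) :
    ∀ x ∈ B, ∃! B' : Set X, IsMaxSubball B' B ∧ x ∈ B' := by
  -- any point of a ball is a center
  have recenter : ∀ (c' : X) (s : ℝ) (x' : X), x' ∈ Metric.ball c' s →
      Metric.ball c' s = Metric.ball x' s := by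
    intro c' s x' hx'
    rw [Metric.mem_ball] at hx'
    ext y
    simp only [Metric.mem_ball]
    constructor
    · intro hy
      calc dist y x' ≤ max (dist y c') (dist c' x') := hX _ _ _
        _ < s := max_lt hy (by rwa [dist_comm])
    · intro hy
      calc dist y c' ≤ max (dist y x') (dist x' c') := hX _ _ _
        _ < s := max_lt hy hx'
  obtain ⟨c, r, hr, rfl⟩ := hB
  intro x hx
  have hxB : Metric.ball c r = Metric.ball x r := recenter c r x hx
  rw [hxB] at h2 ⊢
  have hx' : x ∈ Metric.ball x r := Metric.mem_ball_self hr
  -- a point of B different from x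
  obtain ⟨a, ha, b, hb, hab⟩ := h2
  obtain ⟨y0, hy0, hy0x⟩ : ∃ y ∈ Metric.ball x r, y ≠ x := by
    by_cases hax : a = x
    · exact ⟨b, hb, by rw [← hax]; exact fun h => hab h.symm⟩
    · exact ⟨a, ha, hax⟩
  -- the closure of B is contained in B (balls are clopen)
  have hcl : closure (Metric.ball x r) ⊆ Metric.ball x r := by
    intro y hy
    obtain ⟨z, hz, hdz⟩ := Metric.mem_closure_iff.mp hy r hr
    rw [Metric.mem_ball] at hz ⊢
    calc dist y x ≤ max (dist y z) (dist z x) := hX _ _ _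
      _ < r := max_lt hdz hz
  -- max distance from x within B
  have hK : IsCompact (closure (Metric.ball x r)) := isClosed_closure.isCompact
  obtain ⟨y₁, hy₁mem, hy₁max⟩ := hK.exists_isMaxOn ⟨x, subset_closure hx'⟩
    ((continuous_const.dist continuous_id).continuousOn)
  set m : ℝ := dist x y₁ with hm
  have hmax : ∀ y ∈ Metric.ball x r, dist x y ≤ m := fun y hy =>
    hy₁max (subset_closure hy)
  have hmr : m < r := by
    have := hcl hy₁mem
    rw [Metric.mem_ball, dist_comm] at this
    exact this
  have hm_pos : 0 < m := lt_of_lt_of_le (dist_pos.mpr (Ne.symm hy0x)) (hmax y0 hy0)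
  have hy₁B : y₁ ∈ Metric.ball x r := hcl hy₁mem
  have hy₁not : y₁ ∉ Metric.ball x m := by
    rw [Metric.mem_ball, dist_comm]
    exact lt_irrefl m
  -- ball x m is a proper subball
  have hproper : Metric.ball x m ⊂ Metric.ball x r :=
    ⟨Metric.ball_subset_ball hmr.le, fun h => hy₁not (h hy₁B)⟩
  -- maximality
  have hmaxm : ∀ B'' : Set X, IsBall B'' →
      ¬(Metric.ball x m ⊂ B'' ∧ B'' ⊂ Metric.ball x r) := by
    rintro B'' ⟨c'', t, ht, rfl⟩ ⟨h1, h2'⟩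
    have hxB'' : x ∈ Metric.ball c'' t := h1.1 (Metric.mem_ball_self hm_pos)
    rw [recenter c'' t x hxB''] at h1 h2'
    -- from strictness of h1 : some y ∈ ball x t with dist x y ≥ m, hence t > m
    obtain ⟨y, hyt, hym⟩ := Set.exists_of_ssubset h1
    rw [Metric.mem_ball] at hyt
    rw [Metric.mem_ball, not_lt] at hym
    have htm : m < t := lt_of_le_of_lt hym hyt
    -- from strictness of h2' : some z ∈ ball x r with dist x z ≥ t
    obtain ⟨z, hzr, hzt⟩ := Set.exists_of_ssubset h2'
    rw [Metric.mem_ball, not_lt] at hzt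
    have : dist x z ≤ m := hmax z hzr
    rw [dist_comm] at this
    linarith
  refine ⟨Metric.ball x m, ⟨⟨⟨x, m, hm_pos, rfl⟩, hproper, hmaxm⟩,
    Metric.mem_ball_self hm_pos⟩, ?_⟩
  -- uniqueness
  rintro B' ⟨⟨⟨c', s, hs, rfl⟩, hsub, hmaxl⟩, hxB'⟩
  rw [recenter c' s x hxB'] at hsub hmaxl ⊢
  have hsm : Metric.ball x s ⊆ Metric.ball x m := by
    by_contra hns
    obtain ⟨y, hys, hym⟩ := Set.not_subset.mp hns
    rw [Metric.mem_ball] at hys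
    rw [Metric.mem_ball, not_lt] at hym
    have hms : m < s := lt_of_le_of_lt hym hys
    -- then ball x s strictly between ball x m and B : contradiction
    exact hmaxm (Metric.ball x s) ⟨x, s, lt_trans hm_pos hms, rfl⟩
      ⟨⟨Metric.ball_subset_ball hms.le, fun h =>
        (not_lt.mpr hym) (Metric.mem_ball.mp (h (Metric.mem_ball.mpr hys)))⟩, hsub⟩
  rcases hsm.ssubset_or_eq with hss | heq
  · exact (hmaxl (Metric.ball x m) ⟨x, m, hm_pos, rfl⟩ ⟨hss, hproper⟩).elim
  · exact heq
end
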